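/- arXiv:1901.09768 — 6 statements merged into one kernel-verified Lean document; each statement's English description precedes it below -/
import Mathlib

section
/- If M is a nonsingular totally positive n×n matrix and E = U_i(λ) with 0 ≤ λ < 1, then every entry of |(ME)^{-1}| is greater than or equal to the corresponding entry of |M^{-1}|; i.e., |(ME)^{-1}| dominates M^{-1}. -/
open Matrix BigOperators

/-- A real square matrix is totally positive if all its minors are nonnegative. -/
def TotPos {n : ℕ} (A : Matrix (Fin n) (Fin n) ℝ) : Prop :=
  ∀ (k : ℕ) (r c : Fin k → Fin n), StrictMono r → StrictMono c →
    0 ≤ (A.submatrix r c).det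

/-- Row-stochastic: nonnegative entries, each row sums to 1. -/
def RowStoch {n : ℕ} (A : Matrix (Fin n) (Fin n) ℝ) : Prop :=
  (∀ i j, 0 ≤ A i j) ∧ ∀ i, ∑ j, A i j = 1

/-- J = diag(1, -1, 1, ..., (-1)^(n-1)). -/
def Jmat (n : ℕ) : Matrix (Fin n) (Fin n) ℝ :=
  Matrix.diagonal fun i => (-1 : ℝ) ^ (i : ℕ)

/-- Elementary upper bidiagonal corner-cutting matrix: identity except
entries (i,i) = 1-l and (i,i+1) = l (0-based indexing). -/
def Uel (n i : ℕ) (hi : i + 1 < n) (l : ℝ) : Matrix (Fin n) (Fin n) ℝ :=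
  Matrix.of fun r c =>
    if r = (⟨i, Nat.lt_of_succ_lt hi⟩ : Fin n) ∧ c = (⟨i, Nat.lt_of_succ_lt hi⟩ : Fin n) then 1 - l
    else if r = (⟨i, Nat.lt_of_succ_lt hi⟩ : Fin n) ∧ c = (⟨i + 1, hi⟩ : Fin n) then l
    else if r = c then 1 else 0

/-- Elementary lower bidiagonal corner-cutting matrix: identity except
entries (i+1,i) = l and (i+1,i+1) = 1-l (0-based indexing). -/
def Lel (n i : ℕ) (hi : i + 1 < n) (l : ℝ) : Matrix (Fin n) (Fin n) ℝ :=
  Matrix.of fun r c =>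
    if r = (⟨i + 1, hi⟩ : Fin n) ∧ c = (⟨i, Nat.lt_of_succ_lt hi⟩ : Fin n) then l
    else if r = (⟨i + 1, hi⟩ : Fin n) ∧ c = (⟨i + 1, hi⟩ : Fin n) then 1 - l
    else if r = c then 1 else 0

/-- Minimal (real) eigenvalue of a real square matrix. -/
noncomputable def minEig {n : ℕ} (A : Matrix (Fin n) (Fin n) ℝ) : ℝ :=
  sInf {μ : ℝ | (A - μ • (1 : Matrix (Fin n) (Fin n) ℝ)).det = 0}

/-- Minimal singular value: square root of the minimal eigenvalue of AᵀA. -/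
noncomputable def minSing {n : ℕ} (A : Matrix (Fin n) (Fin n) ℝ) : ℝ :=
  Real.sqrt (minEig (Aᵀ * A))

/-- Maximum absolute row sum norm. -/
noncomputable def normInf {n : ℕ} (A : Matrix (Fin n) (Fin n) ℝ) : ℝ :=
  ⨆ i, ∑ j, |A i j|

/-- Maximum absolute column sum norm. -/
noncomputable def norm1 {n : ℕ} (A : Matrix (Fin n) (Fin n) ℝ) : ℝ :=
  normInf Aᵀ

/-- Condition number in the ∞-norm. -/
noncomputable def condInf {n : ℕ} (A : Matrix (Fin n) (Fin n) ℝ) : ℝ :=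
  normInf A * normInf A⁻¹

/-- Condition number in the 1-norm. -/
noncomputable def cond1 {n : ℕ} (A : Matrix (Fin n) (Fin n) ℝ) : ℝ :=
  norm1 A * norm1 A⁻¹

/-- Spectral radius of a complex square matrix. -/
noncomputable def specRadC {n : ℕ} (A : Matrix (Fin n) (Fin n) ℂ) : ℝ :=
  sSup {x : ℝ | ∃ μ : ℂ, (A - μ • (1 : Matrix (Fin n) (Fin n) ℂ)).det = 0 ∧ x = ‖μ‖}

private lemma keyIneq (l a b x : ℝ) (hl0 : 0 ≤ l) (hl1 : l < 1) (hab : a * b ≤ 0)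
    (h : a = (1 - l) * x + l * b) : |a| ≤ |x| := by
  rcases abs_cases a with ⟨ha1, ha2⟩ | ⟨ha1, ha2⟩ <;>
    rcases abs_cases x with ⟨hx1, hx2⟩ | ⟨hx1, hx2⟩ <;>
    rw [ha1, hx1] <;> nlinarith [hab, sq_nonneg (a - x), sq_nonneg (a + x), mul_nonneg hl0 hl0]

theorem stmt2 (n i : ℕ) (hi : i + 1 < n) (l : ℝ) (hl0 : 0 ≤ l) (hl1 : l < 1)
    (M : Matrix (Fin n) (Fin n) ℝ) (hM : TotPos M) (hMns : IsUnit M.det) :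
    ∀ j k, |(M⁻¹) j k| ≤ |((M * Uel n i hi l)⁻¹) j k| := by
  obtain ⟨m, rfl⟩ : ∃ m, n = m + 1 := ⟨n - 1, by omega⟩
  set fi : Fin (m + 1) := ⟨i, Nat.lt_of_succ_lt hi⟩ with hfi
  set fi1 : Fin (m + 1) := ⟨i + 1, hi⟩ with hfi1
  have hne : fi1 ≠ fi := by simp [hfi, hfi1, Fin.ext_iff]
  set U := Uel (m + 1) i hi l with hU
  -- determinant of U
  have hUtri : U.BlockTriangular id := by
    intro r c hrc
    simp only [id] at hrc
    have h1 : ¬ (r = fi ∧ c = fi) := by rintro ⟨rfl, rfl⟩; exact lt_irrefl _ hrc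
    have h2 : ¬ (r = fi ∧ c = fi1) := by
      rintro ⟨rfl, rfl⟩
      exact absurd hrc (by simp [hfi, hfi1, Fin.lt_iff_val_lt_val])
    have h3 : r ≠ c := ne_of_gt hrc
    simp [hU, Uel, ← hfi, ← hfi1, h1, h2, h3.symm, h3]
  have hUdiag : ∀ r, U r r = if r = fi then 1 - l else 1 := by
    intro r
    by_cases h : r = fi
    · simp [hU, Uel, ← hfi, ← hfi1, h]
    · simp [hU, Uel, ← hfi, ← hfi1, h]
  have hUdet : U.det = 1 - l := by
    rw [Matrix.det_of_upperTriangular hUtri]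
    calc ∏ r, U r r = ∏ r, if r = fi then 1 - l else 1 := by
          exact Finset.prod_congr rfl fun r _ => hUdiag r
      _ = 1 - l := by rw [Finset.prod_ite_eq' Finset.univ fi fun _ => (1 - l)]; simp
  have hMUdet : IsUnit (M * U).det := by
    rw [Matrix.det_mul, hUdet]
    exact (isUnit_iff_ne_zero).2 (mul_ne_zero hMns.ne_zero (by linarith))
  set B := (M * U)⁻¹ with hB
  have hUB : M⁻¹ = U * B := by
    have h1 : (M * U) * B = 1 := Matrix.mul_nonsing_inv _ hMUdet
    have h2 : M⁻¹ * ((M * U) * B) = M⁻¹ := by rw [h1, Matrix.mul_one]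
    calc M⁻¹ = M⁻¹ * ((M * U) * B) := h2.symm
      _ = (M⁻¹ * M) * (U * B) := by rw [Matrix.mul_assoc, Matrix.mul_assoc]
      _ = U * B := by rw [Matrix.nonsing_inv_mul M hMns, Matrix.one_mul]
  -- rows other than fi agree
  have hrow : ∀ j, j ≠ fi → ∀ k, M⁻¹ j k = B j k := by
    intro j hj k
    rw [hUB, Matrix.mul_apply]
    have : ∀ c, U j c * B c k = if j = c then B c k else 0 := by
      intro c
      by_cases h : j = c
      · subst h; simp [hU, Uel, ← hfi, ← hfi1, hj]
      · simp [hU, Uel, ← hfi, ← hfi1, hj, h]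
    rw [Finset.sum_congr rfl fun c _ => this c, Finset.sum_ite_eq]
    simp
  -- row fi
  have hrowi : ∀ k, M⁻¹ fi k = (1 - l) * B fi k + l * B fi1 k := by
    intro k
    rw [hUB, Matrix.mul_apply]
    have : ∀ c, U fi c * B c k
        = (if c = fi then (1 - l) * B fi k else 0) + (if c = fi1 then l * B fi1 k else 0) := by
      intro c
      by_cases h1 : c = fi
      · simp [hU, Uel, ← hfi, ← hfi1, h1, hne, Ne.symm hne]
      · by_cases h2 : c = fi1
        · simp [hU, Uel, ← hfi, ← hfi1, h1, h2, hne, Ne.symm hne]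
        · have h3 : fi ≠ c := fun h => h1 h.symm
          simp [hU, Uel, ← hfi, ← hfi1, h1, h2, h3]
    rw [Finset.sum_congr rfl fun c _ => this c, Finset.sum_add_distrib,
      Finset.sum_ite_eq', Finset.sum_ite_eq']
    simp
  -- sign pattern of M⁻¹
  have hsign : ∀ k, M⁻¹ fi k * M⁻¹ fi1 k ≤ 0 := by
    intro k
    have h1 : 0 ≤ (M.submatrix (Fin.succAbove k) (Fin.succAbove fi)).det :=
      hM m _ _ (Fin.strictMono_succAbove k) (Fin.strictMono_succAbove fi)
    have h2 : 0 ≤ (M.submatrix (Fin.succAbove k) (Fin.succAbove fi1)).det :=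
      hM m _ _ (Fin.strictMono_succAbove k) (Fin.strictMono_succAbove fi1)
    set d1 := (M.submatrix (Fin.succAbove k) (Fin.succAbove fi)).det with hd1
    set d2 := (M.submatrix (Fin.succAbove k) (Fin.succAbove fi1)).det with hd2
    have e1 : M⁻¹ fi k = M.det⁻¹ * ((-1 : ℝ) ^ ((k : ℕ) + i) * d1) := by
      rw [Matrix.inv_def, Matrix.smul_apply, Matrix.adjugate_fin_succ_eq_det_submatrix,
        Ring.inverse_eq_inv']
      rfl
    have e2 : M⁻¹ fi1 k = M.det⁻¹ * ((-1 : ℝ) ^ ((k : ℕ) + (i + 1)) * d2) := by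
      rw [Matrix.inv_def, Matrix.smul_apply, Matrix.adjugate_fin_succ_eq_det_submatrix,
        Ring.inverse_eq_inv']
      rfl
    have hs : ((-1 : ℝ)) ^ ((k : ℕ) + i) * ((-1 : ℝ)) ^ ((k : ℕ) + (i + 1)) = -1 := by
      rw [← pow_add, show ((k : ℕ) + i) + ((k : ℕ) + (i + 1)) = 2 * ((k : ℕ) + i) + 1 by ring,
        pow_succ, pow_mul]
      simp
    have key : M⁻¹ fi k * M⁻¹ fi1 k = -(M.det⁻¹ * M.det⁻¹ * (d1 * d2)) := by
      rw [e1, e2]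
      linear_combination (M.det⁻¹ * d1 * M.det⁻¹ * d2) * hs
    rw [key]
    exact neg_nonpos_of_nonneg (mul_nonneg (mul_self_nonneg _) (mul_nonneg h1 h2))
  intro j k
  by_cases hj : j = fi
  · rw [hj]
    have hb : M⁻¹ fi1 k = B fi1 k := hrow fi1 hne k
    have ha : M⁻¹ fi k = (1 - l) * B fi k + l * M⁻¹ fi1 k := by rw [hb]; exact hrowi k
    exact keyIneq l _ (M⁻¹ fi1 k) _ hl0 hl1 (hsign k) ha
  · rw [hrow j hj k]
end

section
/- If M is a nonsingular totally positive n×n matrix and E = L_i(λ) with 0 ≤ λ < 1, then |(E^T M)^{-1}| dominates M^{-1} entrywise. -/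
open Matrix BigOperators

lemma totPos_det_pos {n : ℕ} {M : Matrix (Fin n) (Fin n) ℝ} (hM : TotPos M)
    (hMns : IsUnit M.det) : 0 < M.det := by
  have h := hM n id id strictMono_id strictMono_id
  rw [Matrix.submatrix_id_id] at h
  exact h.lt_of_ne (Ne.symm (isUnit_iff_ne_zero.mp hMns))

lemma totPos_inv_sign {m : ℕ} {M : Matrix (Fin (m+1)) (Fin (m+1)) ℝ} (hM : TotPos M)
    (hMns : IsUnit M.det) (j k : Fin (m+1)) :
    0 ≤ (-1 : ℝ) ^ ((j : ℕ) + (k : ℕ)) * M⁻¹ j k := by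
  have hdet : 0 < M.det := totPos_det_pos hM hMns
  have hminor : 0 ≤ (M.submatrix k.succAbove j.succAbove).det :=
    hM m _ _ (Fin.strictMono_succAbove k) (Fin.strictMono_succAbove j)
  rw [Matrix.inv_def, Matrix.smul_apply, Matrix.adjugate_fin_succ_eq_det_submatrix,
      Ring.inverse_eq_inv', smul_eq_mul]
  have hsq : (-1:ℝ)^((j:ℕ)+(k:ℕ)) * (-1:ℝ)^((k:ℕ)+(j:ℕ)) = 1 := by
    rw [← pow_add]
    exact Even.neg_one_pow ⟨(j:ℕ)+(k:ℕ), by ring⟩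
  have : (-1:ℝ)^((j:ℕ)+(k:ℕ)) * (M.det⁻¹ * ((-1:ℝ)^((k:ℕ)+(j:ℕ)) *
      (M.submatrix k.succAbove j.succAbove).det))
      = M.det⁻¹ * (M.submatrix k.succAbove j.succAbove).det := by
    calc _ = ((-1:ℝ)^((j:ℕ)+(k:ℕ)) * (-1:ℝ)^((k:ℕ)+(j:ℕ))) *
        (M.det⁻¹ * (M.submatrix k.succAbove j.succAbove).det) := by ring
      _ = _ := by rw [hsq, one_mul]
  rw [this]
  positivity

lemma stdBasisMatrix_transpose' {n : ℕ} (p q : Fin n) (c : ℝ) :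
    (single p q c)ᵀ = single q p c := by
  ext r s
  simp [single, Matrix.transpose_apply, and_comm]

lemma lel_eq (n i : ℕ) (hi : i + 1 < n) (l : ℝ) :
    Lel n i hi l = 1 + l • (single (⟨i+1, hi⟩ : Fin n) ⟨i, Nat.lt_of_succ_lt hi⟩ (1:ℝ)
      - single (⟨i+1, hi⟩ : Fin n) ⟨i+1, hi⟩ 1) := by
  ext r c
  simp only [Lel, of_apply, Matrix.add_apply, Matrix.smul_apply, Matrix.sub_apply, single, one_apply,
    smul_eq_mul]
  split_ifs with h1 h2 h3 h4 h5 h6 h7 h8 h9 h10 h11 h12 h13 h14 <;>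
    (try ring1) <;> (exfalso; simp only [Fin.ext_iff] at *; omega)

lemma lel_mul_lel (n i : ℕ) (hi : i + 1 < n) (l l' : ℝ) (h : l + l' - l * l' = 0) :
    Lel n i hi l * Lel n i hi l' = 1 := by
  set a : Fin n := ⟨i+1, hi⟩
  set b : Fin n := ⟨i, Nat.lt_of_succ_lt hi⟩
  have hba : b ≠ a := by simp [a, b, Fin.ext_iff]
  set N : Matrix (Fin n) (Fin n) ℝ := single a b 1 - single a a 1 with hN
  have hNN : N * N = -N := by
    rw [hN, sub_mul, mul_sub, mul_sub,
      Matrix.single_mul_single_of_ne (h := hba), Matrix.single_mul_single_of_ne (h := hba),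
      Matrix.single_mul_single_same, Matrix.single_mul_single_same]
    ext r c
    simp [single]
  rw [lel_eq, lel_eq]
  show (1 + l • N) * (1 + l' • N) = 1
  have hexp : (1 + l • N) * (1 + l' • N) = 1 + (l + l') • N + (l * l') • (N * N) := by
    simp only [add_mul, mul_add, one_mul, mul_one, smul_mul_smul_comm, add_smul]
    abel
  rw [hexp, hNN, smul_neg]
  have h2 : (l + l') • N - (l * l') • N = ((l + l') - l * l') • N := by
    rw [sub_smul]
  rw [add_assoc, ← sub_eq_add_neg, h2]
  rw [show l + l' - l * l' = 0 from h, zero_smul, add_zero]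

theorem stmt3 (n i : ℕ) (hi : i + 1 < n) (l : ℝ) (hl0 : 0 ≤ l) (hl1 : l < 1)
    (M : Matrix (Fin n) (Fin n) ℝ) (hM : TotPos M) (hMns : IsUnit M.det) :
    ∀ j k, |(M⁻¹) j k| ≤ |(((Lel n i hi l)ᵀ * M)⁻¹) j k| := by
  intro j k
  obtain ⟨m, rfl⟩ : ∃ m, n = m + 1 := ⟨n - 1, by omega⟩
  set a : Fin (m+1) := ⟨i+1, hi⟩ with ha
  set b : Fin (m+1) := ⟨i, Nat.lt_of_succ_lt hi⟩ with hb
  have hl1' : l - 1 ≠ 0 := by linarith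
  set l' : ℝ := l / (l - 1) with hl'def
  have hll' : l + l' - l * l' = 0 := by
    rw [hl'def]
    field_simp [hl'def]
    ring
  have hprod : Lel (m+1) i hi l * Lel (m+1) i hi l' = 1 := lel_mul_lel _ _ _ _ _ hll'
  have hinv : (Lel (m+1) i hi l)⁻¹ = Lel (m+1) i hi l' := Matrix.inv_eq_right_inv hprod
  have key : ((Lel (m+1) i hi l)ᵀ * M)⁻¹ = M⁻¹ * (Lel (m+1) i hi l')ᵀ := by
    rw [Matrix.mul_inv_rev, ← Matrix.transpose_nonsing_inv, hinv]
  rw [key]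
  have htrans : (Lel (m+1) i hi l')ᵀ
      = 1 + l' • (single b a (1:ℝ) - single a a 1) := by
    rw [lel_eq]
    rw [Matrix.transpose_add, Matrix.transpose_smul, Matrix.transpose_sub,
      Matrix.transpose_one, stdBasisMatrix_transpose', stdBasisMatrix_transpose']
  have hentry : (M⁻¹ * (Lel (m+1) i hi l')ᵀ) j k
      = M⁻¹ j k + l' * ((M⁻¹ * single b a (1:ℝ)) j k)
        - l' * ((M⁻¹ * single a a (1:ℝ)) j k) := by
    rw [htrans, Matrix.mul_add, Matrix.mul_one, Matrix.mul_smul, Matrix.mul_sub]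
    simp only [Matrix.add_apply, Matrix.smul_apply, Matrix.sub_apply, smul_eq_mul]
    ring
  rw [hentry]
  by_cases hk : k = a
  · subst hk
    rw [Matrix.mul_single_apply_same, Matrix.mul_single_apply_same]
    set x : ℝ := M⁻¹ j b with hx
    set y : ℝ := M⁻¹ j a with hy
    set s : ℝ := (-1:ℝ) ^ ((j:ℕ) + i) with hs
    have hsx : 0 ≤ s * x := by
      have := totPos_inv_sign hM hMns j b
      simpa [hs, hx, hb] using this
    have hsy : s * y ≤ 0 := by
      have h1 := totPos_inv_sign hM hMns j a
      have h2 : ((j:ℕ) + ((a : Fin (m+1)) : ℕ)) = ((j:ℕ) + i) + 1 := by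
        simp only [ha]
        omega
      rw [h2, pow_succ] at h1
      nlinarith [h1]
    have hl'0 : l' ≤ 0 := by
      rw [hl'def]
      apply div_nonpos_of_nonneg_of_nonpos hl0
      linarith
    have habs : ∀ w : ℝ, |s * w| = |w| := by
      intro w
      rw [abs_mul, hs, abs_pow, abs_neg, abs_one, one_pow, one_mul]
    have hl'x : l' * (s * x) ≤ 0 := mul_nonpos_of_nonpos_of_nonneg hl'0 hsx
    have hl'y : 0 ≤ l' * (s * y) := by
      have h7 := mul_nonneg (neg_nonneg.2 hl'0) (neg_nonneg.2 hsy)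
      rw [neg_mul_neg] at h7
      exact h7
    have hexp : s * (y + l' * (x * 1) - l' * (y * 1)) = s * y + l' * (s * x) - l' * (s * y) := by
      ring
    have h5 : s * (y + l' * (x * 1) - l' * (y * 1)) ≤ s * y := by
      rw [hexp]; linarith
    have h6 : s * (y + l' * (x * 1) - l' * (y * 1)) ≤ 0 := h5.trans hsy
    calc |y| = |s * y| := (habs y).symm
      _ = -(s * y) := abs_of_nonpos hsy
      _ ≤ -(s * (y + l' * (x * 1) - l' * (y * 1))) := by linarith
      _ = |s * (y + l' * (x * 1) - l' * (y * 1))| := (abs_of_nonpos h6).symm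
      _ = |y + l' * (x * 1) - l' * (y * 1)| := habs _
  · simp [hk]
end

section
/- Let M be a nonsingular totally positive n×n matrix and E = U_i(λ) or L_i(λ) with 0 ≤ λ < 1. Then the minimal singular value of ME is less than or equal to the minimal singular value of M. -/
open Matrix BigOperators

section AuxTP
variable {m : ℕ}

variable {m : ℕ}

lemma dot_self_pos {v : Fin m → ℝ} (hv : v ≠ 0) : 0 < v ⬝ᵥ v := by
  have h0 : 0 ≤ v ⬝ᵥ v := Finset.sum_nonneg fun k _ => mul_self_nonneg _
  rcases h0.lt_or_eq with h | h
  · exact h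
  · exfalso; apply hv; funext k
    have := Finset.sum_eq_zero_iff_of_nonneg (fun k (_ : k ∈ Finset.univ) => mul_self_nonneg (v k)) |>.mp h.symm k (Finset.mem_univ k)
    exact mul_self_eq_zero.mp this

lemma onb_dot (b : OrthonormalBasis (Fin m) ℝ (EuclideanSpace ℝ (Fin m))) (c d : Fin m → ℝ) :
    (∑ j, c j • (b j : Fin m → ℝ)) ⬝ᵥ (∑ j, d j • (b j : Fin m → ℝ)) = ∑ j, c j * d j := by
  have horth : ∀ j j', ((b j : Fin m → ℝ) ⬝ᵥ (b j' : Fin m → ℝ)) = if j = j' then 1 else 0 := by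
    intro j j'
    have h := orthonormal_iff_ite.mp b.orthonormal j j'
    rw [← h, PiLp.inner_apply]
    simp [dotProduct, mul_comm]
  simp only [dotProduct, Finset.sum_apply, Pi.smul_apply, PiLp.smul_apply, smul_eq_mul]
  have step : ∀ k, (∑ j, c j * (b j : Fin m → ℝ) k) * (∑ j', d j' * (b j' : Fin m → ℝ) k)
      = ∑ j, ∑ j', (c j * d j') * ((b j : Fin m → ℝ) k * (b j' : Fin m → ℝ) k) := by
    intro k
    rw [Finset.sum_mul_sum]
    exact Finset.sum_congr rfl fun j _ => Finset.sum_congr rfl fun j' _ => by ring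
  rw [Finset.sum_congr rfl fun k _ => step k]
  rw [Finset.sum_comm]
  refine Finset.sum_congr rfl fun j _ => ?_
  rw [Finset.sum_comm]
  have : ∀ j', ∑ k, c j * d j' * ((b j : Fin m → ℝ) k * (b j' : Fin m → ℝ) k)
      = (c j * d j') * ((b j : Fin m → ℝ) ⬝ᵥ (b j' : Fin m → ℝ)) := by
    intro j'; rw [dotProduct, Finset.mul_sum]
  simp_rw [this, horth]
  simp

lemma eig_decomp {C : Matrix (Fin m) (Fin m) ℝ} (hC : C.IsHermitian) (v : Fin m → ℝ) :
    ∃ c : Fin m → ℝ,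
      v = (∑ j, c j • (hC.eigenvectorBasis j : Fin m → ℝ)) ∧
      v ⬝ᵥ v = ∑ j, c j * c j ∧
      v ⬝ᵥ (C *ᵥ v) = ∑ j, hC.eigenvalues j * (c j * c j) ∧
      C *ᵥ v = ∑ j, (hC.eigenvalues j * c j) • (hC.eigenvectorBasis j : Fin m → ℝ) := by
  set b := hC.eigenvectorBasis with hb
  have heig : ∀ j, C *ᵥ (b j : Fin m → ℝ) = hC.eigenvalues j • (b j : Fin m → ℝ) :=
    fun j => hC.mulVec_eigenvectorBasis j
  set c : Fin m → ℝ := fun j => inner (𝕜 := ℝ) (b j) (WithLp.toLp 2 v : EuclideanSpace ℝ (Fin m)) with hc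
  have h1 : v = (∑ j, c j • (b j : Fin m → ℝ)) := by
    have := congrArg WithLp.ofLp (b.sum_repr' (WithLp.toLp 2 v : EuclideanSpace ℝ (Fin m)))
    rw [WithLp.ofLp_sum] at this
    simpa only [WithLp.ofLp_smul] using this.symm
  have h4 : C *ᵥ v = ∑ j, (hC.eigenvalues j * c j) • (b j : Fin m → ℝ) := by
    conv_lhs => rw [h1]
    rw [show C *ᵥ (∑ j, c j • (b j : Fin m → ℝ)) = ∑ j, c j • (C *ᵥ (b j : Fin m → ℝ)) by
      rw [← Matrix.mulVecLin_apply, map_sum]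
      simp [Matrix.mulVecLin_apply, Matrix.mulVec_smul]]
    refine Finset.sum_congr rfl fun j _ => ?_
    rw [heig j, smul_smul, mul_comm]
  refine ⟨c, h1, ?_, ?_, h4⟩
  · conv_lhs => rw [h1]
    rw [onb_dot]
  · conv_lhs => rw [h4, h1]
    rw [onb_dot]
    exact Finset.sum_congr rfl fun j _ => by ring

lemma eig_set {C : Matrix (Fin m) (Fin m) ℝ} (hC : C.IsHermitian) :
    {μ : ℝ | (C - μ • (1 : Matrix (Fin m) (Fin m) ℝ)).det = 0} = Set.range hC.eigenvalues := by
  ext μ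
  simp only [Set.mem_setOf_eq, Set.mem_range]
  rw [← Matrix.exists_mulVec_eq_zero_iff]
  constructor
  · rintro ⟨v, hv, hveq⟩
    have hCv : C *ᵥ v = μ • v := by
      have := hveq
      rw [Matrix.sub_mulVec, Matrix.smul_mulVec, Matrix.one_mulVec, sub_eq_zero] at this
      exact this
    obtain ⟨cv, h1, h2, h3, h4⟩ := eig_decomp hC v
    -- coefficients of C v : eigenvalues j * cv j; coefficients of μ • v : μ * cv j
    have h5 : ∑ j, (hC.eigenvalues j * cv j) • (hC.eigenvectorBasis j : Fin m → ℝ)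
        = ∑ j, (μ * cv j) • (hC.eigenvectorBasis j : Fin m → ℝ) := by
      rw [← h4, hCv, h1]
      rw [Finset.smul_sum]
      exact Finset.sum_congr rfl fun j _ => by rw [smul_smul]
    have h6 : ∀ j, hC.eigenvalues j * cv j = μ * cv j := by
      have hdiff : (∑ j, (hC.eigenvalues j * cv j - μ * cv j) • (hC.eigenvectorBasis j : Fin m → ℝ)) = 0 := by
        simp_rw [sub_smul]
        rw [Finset.sum_sub_distrib, h5, sub_self]
      have hz : (∑ j, (hC.eigenvalues j * cv j - μ * cv j) * (hC.eigenvalues j * cv j - μ * cv j)) = 0 := by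
        rw [← onb_dot hC.eigenvectorBasis (fun j => hC.eigenvalues j * cv j - μ * cv j) (fun j => hC.eigenvalues j * cv j - μ * cv j)]
        rw [hdiff]
        simp
      intro j
      have := Finset.sum_eq_zero_iff_of_nonneg (fun j (_ : j ∈ Finset.univ) => mul_self_nonneg (hC.eigenvalues j * cv j - μ * cv j)) |>.mp hz j (Finset.mem_univ j)
      have := mul_self_eq_zero.mp this
      linarith [sub_eq_zero.mp this]
    have hvne : ∃ j, cv j ≠ 0 := by
      by_contra hcon
      push_neg at hcon
      apply hv
      rw [h1]
      simp [hcon]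
    obtain ⟨j, hj⟩ := hvne
    exact ⟨j, by have := h6 j; field_simp at this; tauto⟩
  · rintro ⟨j, rfl⟩
    refine ⟨(hC.eigenvectorBasis j : Fin m → ℝ), ?_, ?_⟩
    · simpa using hC.eigenvectorBasis.orthonormal.ne_zero j
    · rw [Matrix.sub_mulVec, Matrix.smul_mulVec, Matrix.one_mulVec, sub_eq_zero]
      exact hC.mulVec_eigenvectorBasis j

lemma minEig_le [NeZero m] {C : Matrix (Fin m) (Fin m) ℝ} (hC : C.IsHermitian) (j : Fin m) :
    minEig C ≤ hC.eigenvalues j := by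
  rw [minEig, eig_set hC]
  exact csInf_le (Set.finite_range _).bddBelow ⟨j, rfl⟩

lemma le_minEig [NeZero m] {C : Matrix (Fin m) (Fin m) ℝ} (hC : C.IsHermitian) {a : ℝ}
    (h : ∀ j, a ≤ hC.eigenvalues j) : a ≤ minEig C := by
  rw [minEig, eig_set hC]
  exact le_csInf (Set.range_nonempty _) (by rintro μ ⟨j, rfl⟩; exact h j)

/-- A symmetric entrywise-nonnegative matrix has an entrywise-nonnegative eigenvector
for an eigenvalue `μmax` which dominates all eigenvalues. -/
lemma perron [NeZero m] {C : Matrix (Fin m) (Fin m) ℝ} (hC : C.IsHermitian)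
    (hpos : ∀ j k, 0 ≤ C j k) :
    ∃ (μmax : ℝ) (w : Fin m → ℝ), (∀ j, μmax = hC.eigenvalues j ∨ hC.eigenvalues j ≤ μmax) ∧
      (∃ j0, μmax = hC.eigenvalues j0) ∧
      w ≠ 0 ∧ (∀ k, 0 ≤ w k) ∧ C *ᵥ w = μmax • w := by
  obtain ⟨j0, hj0⟩ := Finite.exists_max hC.eigenvalues
  set μmax := hC.eigenvalues j0 with hμ
  set z : Fin m → ℝ := (hC.eigenvectorBasis j0 : Fin m → ℝ) with hzdef
  have hz0 : z ≠ 0 := by rw [hzdef]; simpa using hC.eigenvectorBasis.orthonormal.ne_zero j0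
  have hCz : C *ᵥ z = μmax • z := hC.mulVec_eigenvectorBasis j0
  set w : Fin m → ℝ := fun k => |z k| with hw
  have hww : w ⬝ᵥ w = z ⬝ᵥ z := by
    simp [dotProduct, hw, abs_mul_abs_self]
  have hw0 : w ≠ 0 := by
    intro h
    apply hz0
    funext k
    have : w k = 0 := congrFun h k
    simpa [hw, abs_eq_zero] using this
  have hle : z ⬝ᵥ (C *ᵥ z) ≤ w ⬝ᵥ (C *ᵥ w) := by
    simp only [dotProduct, Matrix.mulVec, Finset.mul_sum]
    refine Finset.sum_le_sum fun j _ => Finset.sum_le_sum fun k _ => ?_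
    calc z j * (C j k * z k) ≤ |z j * (C j k * z k)| := le_abs_self _
      _ = w j * (C j k * w k) := by
          rw [abs_mul, abs_mul, abs_of_nonneg (hpos j k), hw]
  obtain ⟨c, hc1, hc2, hc3, hc4⟩ := eig_decomp hC w
  have hzCz : z ⬝ᵥ (C *ᵥ z) = μmax * (z ⬝ᵥ z) := by
    rw [hCz, dotProduct_smul, smul_eq_mul]
  have hkey : ∑ j, (μmax - hC.eigenvalues j) * (c j * c j) = 0 := by
    have h1 : ∑ j, hC.eigenvalues j * (c j * c j) ≥ μmax * ∑ j, c j * c j := by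
      rw [← hc3, ← hc2, hww, ← hzCz]
      exact hle
    have h2 : ∑ j, (μmax - hC.eigenvalues j) * (c j * c j) ≤ 0 := by
      have : ∑ j, (μmax - hC.eigenvalues j) * (c j * c j)
          = μmax * (∑ j, c j * c j) - ∑ j, hC.eigenvalues j * (c j * c j) := by
        rw [Finset.mul_sum, ← Finset.sum_sub_distrib]
        exact Finset.sum_congr rfl fun j _ => by ring
      linarith
    have h3 : 0 ≤ ∑ j, (μmax - hC.eigenvalues j) * (c j * c j) :=
      Finset.sum_nonneg fun j _ => mul_nonneg (by linarith [hj0 j]) (mul_self_nonneg _)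
    linarith
  have hterm : ∀ j, (μmax - hC.eigenvalues j) * (c j * c j) = 0 := fun j =>
    (Finset.sum_eq_zero_iff_of_nonneg fun j _ =>
      mul_nonneg (by linarith [hj0 j]) (mul_self_nonneg _)).mp hkey j (Finset.mem_univ j)
  have hCw : C *ᵥ w = μmax • w := by
    rw [hc4]
    conv_rhs => rw [hc1]
    rw [Finset.smul_sum]
    refine Finset.sum_congr rfl fun j _ => ?_
    rw [smul_smul]
    congr 1
    rcases eq_or_ne (c j) 0 with h | h
    · simp [h]
    · have := hterm j
      have hc0 : c j * c j ≠ 0 := mul_ne_zero h h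
      have : μmax - hC.eigenvalues j = 0 := by
        rcases mul_eq_zero.mp this with h' | h'
        · exact h'
        · exact absurd h' hc0
      have : hC.eigenvalues j = μmax := by linarith
      rw [this]
  exact ⟨μmax, w, fun j => Or.inr (hj0 j), ⟨j0, rfl⟩, hw0, fun k => abs_nonneg _, hCw⟩


end AuxTP

section AuxJ
variable {n : ℕ}



lemma Jmat_transpose : (Jmat n)ᵀ = Jmat n := Matrix.diagonal_transpose _

lemma Jmat_mul_Jmat : Jmat n * Jmat n = 1 := by
  rw [Jmat, Matrix.diagonal_mul_diagonal]
  rw [show (fun i : Fin n => (-1:ℝ) ^ (i:ℕ) * (-1) ^ (i:ℕ)) = fun _ => 1 by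
    funext i; rw [← mul_pow]; norm_num]
  exact Matrix.diagonal_one

lemma Jmat_mulVec (v : Fin n → ℝ) (k : Fin n) : (Jmat n *ᵥ v) k = (-1 : ℝ) ^ (k : ℕ) * v k := by
  rw [Jmat, Matrix.mulVec_diagonal]

-- det M > 0 for TP nonsingular
lemma det_pos_of_totPos {M : Matrix (Fin n) (Fin n) ℝ} (hM : TotPos M) (hMns : IsUnit M.det) :
    0 < M.det := by
  have h0 : 0 ≤ M.det := by
    have := hM n id id strictMono_id strictMono_id
    simpa using this
  rcases h0.lt_or_eq with h | h
  · exact h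
  · exact absurd h.symm hMns.ne_zero

-- entries of J M⁻¹ J are nonnegative
lemma jinvj_nonneg {n' : ℕ} {M : Matrix (Fin (n'+1)) (Fin (n'+1)) ℝ}
    (hM : TotPos M) (hMns : IsUnit M.det) (j k : Fin (n'+1)) :
    0 ≤ (Jmat (n'+1) * M⁻¹ * Jmat (n'+1)) j k := by
  have hdet : 0 < M.det := det_pos_of_totPos hM hMns
  have hentry : (Jmat (n'+1) * M⁻¹ * Jmat (n'+1)) j k
      = (-1:ℝ) ^ (j:ℕ) * M⁻¹ j k * (-1) ^ (k:ℕ) := by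
    rw [Jmat, Matrix.mul_diagonal, Matrix.diagonal_mul]
  rw [hentry, Matrix.inv_def, Matrix.smul_apply,
    Matrix.adjugate_fin_succ_eq_det_submatrix, smul_eq_mul]
  have hminor : 0 ≤ (M.submatrix (Fin.succAbove k) (Fin.succAbove j)).det :=
    hM n' _ _ (Fin.strictMono_succAbove k) (Fin.strictMono_succAbove j)
  have hsign : (-1:ℝ) ^ (j:ℕ) * ((-1) ^ ((k:ℕ) + (j:ℕ))) * (-1) ^ (k:ℕ) = 1 := by
    ring_nf
    rw [show (j:ℕ) * 2 = 2 * (j:ℕ) by ring, show (k:ℕ) * 2 = 2 * (k:ℕ) by ring,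
      pow_mul, pow_mul]
    norm_num
  rw [Ring.inverse_eq_inv]
  have hre : (-1:ℝ) ^ (j:ℕ) * (M.det⁻¹ * ((-1) ^ ((k:ℕ)+(j:ℕ)) * (M.submatrix (Fin.succAbove k) (Fin.succAbove j)).det)) * (-1) ^ (k:ℕ)
      = (M.det⁻¹ * (M.submatrix (Fin.succAbove k) (Fin.succAbove j)).det) * ((-1:ℝ) ^ (j:ℕ) * ((-1) ^ ((k:ℕ)+(j:ℕ))) * (-1) ^ (k:ℕ)) := by ring
  rw [hre, hsign, mul_one]
  exact mul_nonneg (le_of_lt (inv_pos.mpr hdet)) hminor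


variable {M : Matrix (Fin n) (Fin n) ℝ}

lemma conjT_eq_T (A : Matrix (Fin n) (Fin n) ℝ) : Aᴴ = Aᵀ :=
  Matrix.conjTranspose_eq_transpose_of_trivial A

lemma B_posDef (hMns : IsUnit M.det) : (Mᵀ * M).PosDef := by
  refine Matrix.PosDef.of_dotProduct_mulVec_pos (by rw [Matrix.IsHermitian, Matrix.conjTranspose_eq_transpose_of_trivial]; exact isSymm_transpose_mul_self M) fun x hx => ?_
  have hMx : M *ᵥ x ≠ 0 := by
    intro h
    apply hx
    have hinj : Function.Injective (M.mulVec) :=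
      Matrix.mulVec_injective_iff_isUnit.mpr ((Matrix.isUnit_iff_isUnit_det M).mpr hMns)
    have := hinj (a₁ := x) (a₂ := 0) (by rw [h, Matrix.mulVec_zero])
    exact this
  have : star x ⬝ᵥ ((Mᵀ * M) *ᵥ x) = (M *ᵥ x) ⬝ᵥ (M *ᵥ x) := by
    rw [star_trivial, ← Matrix.mulVec_mulVec, Matrix.dotProduct_mulVec, Matrix.vecMul_transpose]
  rw [this]
  have h0 : 0 ≤ (M *ᵥ x) ⬝ᵥ (M *ᵥ x) := Finset.sum_nonneg fun k _ => mul_self_nonneg _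
  rcases h0.lt_or_eq with h | h
  · exact h
  · exfalso; apply hMx; funext k
    have := Finset.sum_eq_zero_iff_of_nonneg (fun k (_ : k ∈ Finset.univ) => mul_self_nonneg ((M *ᵥ x) k)) |>.mp h.symm k (Finset.mem_univ k)
    exact mul_self_eq_zero.mp this

lemma C_herm (hB : (Mᵀ * M).IsHermitian) :
    (Jmat n * (Mᵀ * M)⁻¹ * Jmat n).IsHermitian := by
  have hBT : (Mᵀ * M)ᵀ = Mᵀ * M := by
    rw [← conjT_eq_T]; exact hB
  rw [Matrix.IsHermitian, conjT_eq_T, Matrix.transpose_mul, Matrix.transpose_mul,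
    Jmat_transpose, Matrix.transpose_nonsing_inv, hBT, Matrix.mul_assoc]

lemma C_posDef (hMns : IsUnit M.det) : (Jmat n * (Mᵀ * M)⁻¹ * Jmat n).PosDef := by
  have hB := B_posDef (M := M) hMns
  have hBinv := hB.inv
  refine Matrix.PosDef.of_dotProduct_mulVec_pos (C_herm hB.isHermitian) fun x hx => ?_
  have hJx : Jmat n *ᵥ x ≠ 0 := by
    intro h
    apply hx
    have : Jmat n *ᵥ (Jmat n *ᵥ x) = x := by
      rw [Matrix.mulVec_mulVec, Jmat_mul_Jmat, Matrix.one_mulVec]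
    rw [← this, h, Matrix.mulVec_zero]
  have key : star x ⬝ᵥ ((Jmat n * (Mᵀ * M)⁻¹ * Jmat n) *ᵥ x)
      = star (Jmat n *ᵥ x) ⬝ᵥ ((Mᵀ * M)⁻¹ *ᵥ (Jmat n *ᵥ x)) := by
    have hswap : x ᵥ* Jmat n = Jmat n *ᵥ x := by
      funext k; rw [Jmat, Matrix.vecMul_diagonal, Matrix.mulVec_diagonal, mul_comm]
    rw [star_trivial, star_trivial, ← Matrix.mulVec_mulVec, ← Matrix.mulVec_mulVec,
      Matrix.dotProduct_mulVec x, hswap]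
  rw [key]
  exact hBinv.dotProduct_mulVec_pos hJx

-- reciprocal-eigenvalue transfer
lemma recip_eig (hMns : IsUnit M.det) {μ : ℝ} (hμ : 0 < μ)
    (h : ((Mᵀ * M) - μ • (1 : Matrix (Fin n) (Fin n) ℝ)).det = 0) :
    ((Jmat n * (Mᵀ * M)⁻¹ * Jmat n) - μ⁻¹ • (1 : Matrix (Fin n) (Fin n) ℝ)).det = 0 := by
  set B := Mᵀ * M with hBdef
  have hBunit : IsUnit B.det := by
    exact (B_posDef (M := M) hMns).det_pos.ne'.isUnit
  have hfact : B⁻¹ - μ⁻¹ • (1 : Matrix (Fin n) (Fin n) ℝ)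
      = (-μ⁻¹) • (B⁻¹ * (B - μ • 1)) := by
    rw [Matrix.mul_sub, Matrix.nonsing_inv_mul _ hBunit, Matrix.mul_smul, Matrix.mul_one,
      smul_sub, smul_smul]
    rw [neg_mul, inv_mul_cancel₀ hμ.ne']
    simp [sub_eq_add_neg, add_comm]
  have hdet1 : (B⁻¹ - μ⁻¹ • (1 : Matrix (Fin n) (Fin n) ℝ)).det = 0 := by
    rw [hfact, Matrix.det_smul, Matrix.det_mul, h, mul_zero, mul_zero]
  have hconj : (Jmat n * B⁻¹ * Jmat n) - μ⁻¹ • (1 : Matrix (Fin n) (Fin n) ℝ)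
      = Jmat n * (B⁻¹ - μ⁻¹ • 1) * Jmat n := by
    rw [Matrix.mul_sub, Matrix.sub_mul]
    congr 1
    rw [Matrix.mul_smul, Matrix.smul_mul, Matrix.mul_one, Jmat_mul_Jmat]
  rw [hconj, Matrix.det_mul, Matrix.det_mul, hdet1, mul_zero, zero_mul]


end AuxJ

section AuxCorner

variable {n i : ℕ} (hi : i + 1 < n) {l : ℝ}

lemma sq_div_bound {l p q : ℝ} (hl0 : 0 ≤ l) (hl1 : l < 1) (hpq : p * q ≤ 0) :
    p * p ≤ ((p - l * q) / (1 - l)) * ((p - l * q) / (1 - l)) := by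
  have h1 : 0 < 1 - l := by linarith
  rw [div_mul_div_comm, le_div_iff₀ (by positivity)]
  nlinarith [mul_nonneg hl0 (neg_nonneg.mpr hpq), sq_nonneg q, sq_nonneg p,
    mul_nonneg (mul_nonneg hl0 hl0) (sq_nonneg q),
    mul_nonneg (mul_nonneg hl0 (sub_nonneg.mpr hl1.le)) (sq_nonneg p)]

lemma uel_row_a (c : Fin n) :
    Uel n i hi l ⟨i, Nat.lt_of_succ_lt hi⟩ c =
      if c = ⟨i, Nat.lt_of_succ_lt hi⟩ then 1 - l else if c = ⟨i+1, hi⟩ then l else 0 := by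
  simp only [Uel, Matrix.of_apply, true_and]
  by_cases h2 : c = (⟨i, Nat.lt_of_succ_lt hi⟩ : Fin n)
  · simp [h2]
  · by_cases h3 : c = (⟨i+1, hi⟩ : Fin n)
    · simp [h2, h3]
    · simp only [h2, h3, if_false]
      rw [if_neg (show ¬(⟨i, Nat.lt_of_succ_lt hi⟩ : Fin n) = c from fun h => h2 h.symm)]

lemma uel_row_ne {r : Fin n} (hr : r ≠ ⟨i, Nat.lt_of_succ_lt hi⟩) (c : Fin n) :
    Uel n i hi l r c = if c = r then 1 else 0 := by
  simp only [Uel, Matrix.of_apply, hr, false_and, if_false]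
  by_cases h : r = c
  · simp [h]
  · simp only [h, if_false]
    rw [if_neg (fun h' => h h'.symm)]

lemma lel_row_b (c : Fin n) :
    Lel n i hi l ⟨i+1, hi⟩ c =
      if c = ⟨i, Nat.lt_of_succ_lt hi⟩ then l else if c = ⟨i+1, hi⟩ then 1 - l else 0 := by
  simp only [Lel, Matrix.of_apply, true_and]
  by_cases h2 : c = (⟨i, Nat.lt_of_succ_lt hi⟩ : Fin n)
  · have : c ≠ (⟨i+1, hi⟩ : Fin n) := by simp [h2, Fin.ext_iff]
    simp [h2, this]
  · by_cases h3 : c = (⟨i+1, hi⟩ : Fin n)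
    · simp [h2, h3]
    · simp only [h2, h3, if_false]
      rw [if_neg (show ¬(⟨i+1, hi⟩ : Fin n) = c from fun h => h3 h.symm)]

lemma lel_row_ne {r : Fin n} (hr : r ≠ ⟨i+1, hi⟩) (c : Fin n) :
    Lel n i hi l r c = if c = r then 1 else 0 := by
  simp only [Lel, Matrix.of_apply, hr, false_and, if_false]
  by_cases h : r = c
  · simp [h]
  · simp only [h, if_false]
    rw [if_neg (fun h' => h h'.symm)]

lemma uel_solve (hl0 : 0 ≤ l) (hl1 : l < 1) (y : Fin n → ℝ)
    (hsign : y ⟨i, Nat.lt_of_succ_lt hi⟩ * y ⟨i+1, hi⟩ ≤ 0) :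
    ∃ x : Fin n → ℝ, Uel n i hi l *ᵥ x = y ∧ y ⬝ᵥ y ≤ x ⬝ᵥ x := by
  have hab : (⟨i, Nat.lt_of_succ_lt hi⟩ : Fin n) ≠ ⟨i+1, hi⟩ := by simp [Fin.ext_iff]
  have hl' : (1:ℝ) - l ≠ 0 := by linarith
  refine ⟨Function.update y ⟨i, Nat.lt_of_succ_lt hi⟩
    ((y ⟨i, Nat.lt_of_succ_lt hi⟩ - l * y ⟨i+1, hi⟩) / (1 - l)), ?_, ?_⟩
  · funext r
    show (∑ c, Uel n i hi l r c * _) = y r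
    by_cases hr : r = ⟨i, Nat.lt_of_succ_lt hi⟩
    · subst hr
      have hterm : ∀ c, Uel n i hi l ⟨i, Nat.lt_of_succ_lt hi⟩ c *
          Function.update y ⟨i, Nat.lt_of_succ_lt hi⟩
            ((y ⟨i, Nat.lt_of_succ_lt hi⟩ - l * y ⟨i+1, hi⟩) / (1 - l)) c
          = (if c = (⟨i, Nat.lt_of_succ_lt hi⟩ : Fin n) then
              (1-l) * ((y ⟨i, Nat.lt_of_succ_lt hi⟩ - l * y ⟨i+1, hi⟩) / (1 - l)) else 0)
            + (if c = (⟨i+1, hi⟩ : Fin n) then l * y ⟨i+1, hi⟩ else 0) := by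
        intro c
        rw [uel_row_a]
        by_cases h2 : c = (⟨i, Nat.lt_of_succ_lt hi⟩ : Fin n)
        · subst h2
          simp [Function.update_self, hab]
        · by_cases h3 : c = (⟨i+1, hi⟩ : Fin n)
          · subst h3
            simp [h2, Function.update_of_ne (Ne.symm hab)]
          · simp [h2, h3]
      rw [Finset.sum_congr rfl fun c _ => hterm c, Finset.sum_add_distrib,
        Finset.sum_ite_eq' Finset.univ, Finset.sum_ite_eq' Finset.univ]
      simp only [Finset.mem_univ, if_true]
      field_simp
      ring
    · have hterm : ∀ c, Uel n i hi l r c *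
          Function.update y ⟨i, Nat.lt_of_succ_lt hi⟩
            ((y ⟨i, Nat.lt_of_succ_lt hi⟩ - l * y ⟨i+1, hi⟩) / (1 - l)) c
          = (if c = r then Function.update y ⟨i, Nat.lt_of_succ_lt hi⟩
            ((y ⟨i, Nat.lt_of_succ_lt hi⟩ - l * y ⟨i+1, hi⟩) / (1 - l)) c else 0) := by
        intro c
        rw [uel_row_ne hi hr]
        by_cases h : c = r <;> simp [h]
      rw [Finset.sum_congr rfl fun c _ => hterm c, Finset.sum_ite_eq' Finset.univ]
      simp only [Finset.mem_univ, if_true]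
      exact Function.update_of_ne hr _ y
  · refine Finset.sum_le_sum fun k _ => ?_
    by_cases hk : k = ⟨i, Nat.lt_of_succ_lt hi⟩
    · subst hk
      rw [Function.update_self]
      exact sq_div_bound hl0 hl1 hsign
    · rw [Function.update_of_ne hk]

lemma lel_solve (hl0 : 0 ≤ l) (hl1 : l < 1) (y : Fin n → ℝ)
    (hsign : y ⟨i+1, hi⟩ * y ⟨i, Nat.lt_of_succ_lt hi⟩ ≤ 0) :
    ∃ x : Fin n → ℝ, Lel n i hi l *ᵥ x = y ∧ y ⬝ᵥ y ≤ x ⬝ᵥ x := by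
  have hab : (⟨i, Nat.lt_of_succ_lt hi⟩ : Fin n) ≠ ⟨i+1, hi⟩ := by simp [Fin.ext_iff]
  have hl' : (1:ℝ) - l ≠ 0 := by linarith
  refine ⟨Function.update y ⟨i+1, hi⟩
    ((y ⟨i+1, hi⟩ - l * y ⟨i, Nat.lt_of_succ_lt hi⟩) / (1 - l)), ?_, ?_⟩
  · funext r
    show (∑ c, Lel n i hi l r c * _) = y r
    by_cases hr : r = ⟨i+1, hi⟩
    · subst hr
      have hterm : ∀ c, Lel n i hi l ⟨i+1, hi⟩ c *
          Function.update y ⟨i+1, hi⟩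
            ((y ⟨i+1, hi⟩ - l * y ⟨i, Nat.lt_of_succ_lt hi⟩) / (1 - l)) c
          = (if c = (⟨i, Nat.lt_of_succ_lt hi⟩ : Fin n) then
              l * y ⟨i, Nat.lt_of_succ_lt hi⟩ else 0)
            + (if c = (⟨i+1, hi⟩ : Fin n) then
              (1-l) * ((y ⟨i+1, hi⟩ - l * y ⟨i, Nat.lt_of_succ_lt hi⟩) / (1 - l)) else 0) := by
        intro c
        rw [lel_row_b]
        by_cases h2 : c = (⟨i, Nat.lt_of_succ_lt hi⟩ : Fin n)
        · subst h2
          simp [Function.update_of_ne hab, hab]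
        · by_cases h3 : c = (⟨i+1, hi⟩ : Fin n)
          · subst h3
            simp [h2, Function.update_self]
          · simp [h2, h3]
      rw [Finset.sum_congr rfl fun c _ => hterm c, Finset.sum_add_distrib,
        Finset.sum_ite_eq' Finset.univ, Finset.sum_ite_eq' Finset.univ]
      simp only [Finset.mem_univ, if_true]
      field_simp
      ring
    · have hterm : ∀ c, Lel n i hi l r c *
          Function.update y ⟨i+1, hi⟩
            ((y ⟨i+1, hi⟩ - l * y ⟨i, Nat.lt_of_succ_lt hi⟩) / (1 - l)) c
          = (if c = r then Function.update y ⟨i+1, hi⟩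
            ((y ⟨i+1, hi⟩ - l * y ⟨i, Nat.lt_of_succ_lt hi⟩) / (1 - l)) c else 0) := by
        intro c
        rw [lel_row_ne hi hr]
        by_cases h : c = r <;> simp [h]
      rw [Finset.sum_congr rfl fun c _ => hterm c, Finset.sum_ite_eq' Finset.univ]
      simp only [Finset.mem_univ, if_true]
      exact Function.update_of_ne hr _ y
  · refine Finset.sum_le_sum fun k _ => ?_
    by_cases hk : k = ⟨i+1, hi⟩
    · subst hk
      rw [Function.update_self]
      exact sq_div_bound hl0 hl1 hsign
    · rw [Function.update_of_ne hk]


end AuxCorner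

lemma quad_eq {m : ℕ} (A : Matrix (Fin m) (Fin m) ℝ) (x : Fin m → ℝ) :
    x ⬝ᵥ ((Aᵀ * A) *ᵥ x) = (A *ᵥ x) ⬝ᵥ (A *ᵥ x) := by
  rw [← Matrix.mulVec_mulVec, Matrix.dotProduct_mulVec, Matrix.vecMul_transpose]

lemma final_step {m : ℕ} [NeZero m] (M E : Matrix (Fin m) (Fin m) ℝ)
    (y x : Fin m → ℝ) (hy0 : y ≠ 0) (hEx : E *ᵥ x = y) (hxx : y ⬝ᵥ y ≤ x ⬝ᵥ x)
    (t : ℝ) (ht : 0 < t) (hBy : (Mᵀ * M) *ᵥ y = t • y) (htm : t ≤ minEig (Mᵀ * M)) :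
    minSing (M * E) ≤ minSing M := by
  rw [minSing, minSing]
  apply Real.sqrt_le_sqrt
  have hA : ((M * E)ᵀ * (M * E)).IsHermitian := by rw [Matrix.IsHermitian, Matrix.conjTranspose_eq_transpose_of_trivial]; exact isSymm_transpose_mul_self (M * E)
  have hypos : 0 < y ⬝ᵥ y := dot_self_pos hy0
  have hxpos : 0 < x ⬝ᵥ x := lt_of_lt_of_le hypos hxx
  obtain ⟨c, hc1, hc2, hc3, hc4⟩ := eig_decomp hA x
  have hray : minEig ((M * E)ᵀ * (M * E)) * (x ⬝ᵥ x) ≤ x ⬝ᵥ (((M * E)ᵀ * (M * E)) *ᵥ x) := by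
    rw [hc2, hc3, Finset.mul_sum]
    exact Finset.sum_le_sum fun j _ =>
      mul_le_mul_of_nonneg_right (minEig_le hA j) (mul_self_nonneg _)
  have hq : x ⬝ᵥ (((M * E)ᵀ * (M * E)) *ᵥ x) = y ⬝ᵥ ((Mᵀ * M) *ᵥ y) := by
    rw [quad_eq (M * E) x, quad_eq M y, ← Matrix.mulVec_mulVec, hEx]
  have hqy : y ⬝ᵥ ((Mᵀ * M) *ᵥ y) = t * (y ⬝ᵥ y) := by
    rw [hBy, dotProduct_smul, smul_eq_mul]
  have hchain : minEig ((M * E)ᵀ * (M * E)) * (x ⬝ᵥ x) ≤ t * (x ⬝ᵥ x) := by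
    calc minEig ((M * E)ᵀ * (M * E)) * (x ⬝ᵥ x)
        ≤ x ⬝ᵥ (((M * E)ᵀ * (M * E)) *ᵥ x) := hray
      _ = t * (y ⬝ᵥ y) := by rw [hq, hqy]
      _ ≤ t * (x ⬝ᵥ x) := mul_le_mul_of_nonneg_left hxx ht.le
  have h1 : minEig ((M * E)ᵀ * (M * E)) ≤ t := le_of_mul_le_mul_right hchain hxpos
  linarith

theorem stmt5 (n i : ℕ) (hi : i + 1 < n) (l : ℝ) (hl0 : 0 ≤ l) (hl1 : l < 1)
    (M E : Matrix (Fin n) (Fin n) ℝ) (hM : TotPos M) (hMns : IsUnit M.det)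
    (hE : E = Uel n i hi l ∨ E = Lel n i hi l) :
    minSing (M * E) ≤ minSing M := by
  classical
  obtain ⟨n', rfl⟩ : ∃ k, n = k + 1 := ⟨n - 1, by omega⟩
  have hMunit : IsUnit M := (Matrix.isUnit_iff_isUnit_det M).mpr hMns
  have hB : (Mᵀ * M).PosDef := B_posDef hMns
  have hBunit : IsUnit (Mᵀ * M).det := hB.det_pos.ne'.isUnit
  have hCpd : (Jmat (n'+1) * (Mᵀ * M)⁻¹ * Jmat (n'+1)).PosDef := C_posDef hMns
  have hC : (Jmat (n'+1) * (Mᵀ * M)⁻¹ * Jmat (n'+1)).IsHermitian := hCpd.isHermitian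
  -- total positivity of the transpose
  have hMTtp : TotPos Mᵀ := by
    intro k r c hr hc
    have h := hM k c r hc hr
    have : (Mᵀ.submatrix r c) = (M.submatrix c r)ᵀ := by
      funext p q; rfl
    rw [this, Matrix.det_transpose]
    exact h
  have hMTdet : IsUnit (Mᵀ).det := by rw [Matrix.det_transpose]; exact hMns
  -- entrywise nonnegativity of C
  have hJJmul : ∀ X : Matrix (Fin (n'+1)) (Fin (n'+1)) ℝ,
      Jmat (n'+1) * (Jmat (n'+1) * X) = X := fun X => by
    rw [← Matrix.mul_assoc, Jmat_mul_Jmat, Matrix.one_mul]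
  have hCsplit : Jmat (n'+1) * (Mᵀ * M)⁻¹ * Jmat (n'+1)
      = (Jmat (n'+1) * M⁻¹ * Jmat (n'+1)) * (Jmat (n'+1) * (Mᵀ)⁻¹ * Jmat (n'+1)) := by
    rw [Matrix.mul_inv_rev]
    simp only [Matrix.mul_assoc]
    rw [hJJmul]
  have hCpos : ∀ j k, 0 ≤ (Jmat (n'+1) * (Mᵀ * M)⁻¹ * Jmat (n'+1)) j k := by
    intro j k
    rw [hCsplit, Matrix.mul_apply]
    exact Finset.sum_nonneg fun p _ =>
      mul_nonneg (jinvj_nonneg hM hMns j p) (jinvj_nonneg hMTtp hMTdet p k)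
  -- Perron step
  obtain ⟨mu, w, hdom, ⟨j0, hj0⟩, hw0, hwpos, hCw⟩ := perron hC hCpos
  have hmupos : 0 < mu := by rw [hj0]; exact hCpd.eigenvalues_pos j0
  -- the alternating vector y
  set y := Jmat (n'+1) *ᵥ w with hy
  have hyk : ∀ k : Fin (n'+1), y k = (-1:ℝ)^(k:ℕ) * w k := fun k => Jmat_mulVec w k
  have hy0 : y ≠ 0 := by
    intro h
    apply hw0
    have : Jmat (n'+1) *ᵥ (Jmat (n'+1) *ᵥ w) = w := by
      rw [Matrix.mulVec_mulVec, Jmat_mul_Jmat, Matrix.one_mulVec]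
    rw [← this, ← hy, h, Matrix.mulVec_zero]
  have hBinvy : (Mᵀ * M)⁻¹ *ᵥ y = mu • y := by
    rw [hy, Matrix.mulVec_mulVec]
    have hBJ : (Mᵀ * M)⁻¹ * Jmat (n'+1) = Jmat (n'+1) * (Jmat (n'+1) * (Mᵀ * M)⁻¹ * Jmat (n'+1)) := by
      rw [show Jmat (n'+1) * (Mᵀ * M)⁻¹ * Jmat (n'+1) = Jmat (n'+1) * ((Mᵀ * M)⁻¹ * Jmat (n'+1)) from by rw [Matrix.mul_assoc], hJJmul]
    rw [hBJ, ← Matrix.mulVec_mulVec, hCw, Matrix.mulVec_smul]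
  clear_value y
  have hBy : (Mᵀ * M) *ᵥ y = mu⁻¹ • y := by
    have h1 : (Mᵀ * M) *ᵥ ((Mᵀ * M)⁻¹ *ᵥ y) = (Mᵀ * M) *ᵥ (mu • y) := by rw [hBinvy]
    rw [Matrix.mulVec_mulVec, Matrix.mul_nonsing_inv _ hBunit, Matrix.one_mulVec,
      Matrix.mulVec_smul] at h1
    have h2 := congrArg (fun v => mu⁻¹ • v) h1
    simp only [smul_smul, inv_mul_cancel₀ hmupos.ne', one_smul] at h2
    exact h2.symm
  -- lower bound on minEig (Mᵀ M)
  have hminB : mu⁻¹ ≤ minEig (Mᵀ * M) := by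
    apply le_minEig hB.isHermitian
    intro j
    have hlpos := hB.eigenvalues_pos j
    have hdet0 : ((Mᵀ * M) - hB.isHermitian.eigenvalues j • 1).det = 0 := by
      have : hB.isHermitian.eigenvalues j ∈
          {μ : ℝ | ((Mᵀ * M) - μ • (1 : Matrix (Fin (n'+1)) (Fin (n'+1)) ℝ)).det = 0} := by
        rw [eig_set hB.isHermitian]; exact ⟨j, rfl⟩
      exact this
    have hrec := recip_eig hMns hlpos hdet0
    have hmem : (hB.isHermitian.eigenvalues j)⁻¹ ∈ Set.range hC.eigenvalues := by
      rw [← eig_set hC]; exact hrec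
    obtain ⟨j', hj'⟩ := hmem
    have hle : (hB.isHermitian.eigenvalues j)⁻¹ ≤ mu := by
      rcases hdom j' with h | h
      · exact le_of_eq (hj'.symm.trans h.symm)
      · rwa [hj'] at h
    have h2 : mu⁻¹ ≤ ((hB.isHermitian.eigenvalues j)⁻¹)⁻¹ :=
      inv_anti₀ (inv_pos.mpr hlpos) hle
    rwa [inv_inv] at h2
  -- sign pattern of y at positions i, i+1
  have hsign : y ⟨i, Nat.lt_of_succ_lt hi⟩ * y ⟨i+1, hi⟩ ≤ 0 := by
    rw [hyk, hyk]
    have hc1 : (((⟨i, Nat.lt_of_succ_lt hi⟩ : Fin (n'+1))) : ℕ) = i := rfl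
    have hc2 : (((⟨i+1, hi⟩ : Fin (n'+1))) : ℕ) = i + 1 := rfl
    rw [hc1, hc2]
    have hkey : (-1:ℝ)^i * w ⟨i, Nat.lt_of_succ_lt hi⟩ * ((-1:ℝ)^(i+1) * w ⟨i+1, hi⟩)
        = -(((-1:ℝ)^i * (-1:ℝ)^i) * (w ⟨i, Nat.lt_of_succ_lt hi⟩ * w ⟨i+1, hi⟩)) := by
      rw [pow_succ]; ring
    rw [hkey, show (-1:ℝ)^i * (-1:ℝ)^i = 1 from by rw [← mul_pow]; norm_num, one_mul]
    exact neg_nonpos.mpr (mul_nonneg (hwpos _) (hwpos _))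
  -- construct x and finish
  rcases hE with rfl | rfl
  · obtain ⟨x, hEx, hxx⟩ := uel_solve hi hl0 hl1 y hsign
    exact final_step M _ y x hy0 hEx hxx mu⁻¹ (inv_pos.mpr hmupos) hBy hminB
  · obtain ⟨x, hEx, hxx⟩ := lel_solve hi hl0 hl1 y
      (by rw [mul_comm] at hsign; exact hsign)
    exact final_step M _ y x hy0 hEx hxx mu⁻¹ (inv_pos.mpr hmupos) hBy hminB
end

section
/- Let M be a nonsingular totally positive n×n matrix and E = U_i(λ) or L_i(λ) with 0 ≤ λ < 1. Then κ_∞(M) ≤ κ_∞(ME), where κ_∞(A) = ‖A‖_∞ ‖A^{-1}‖_∞. -/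
open Matrix BigOperators

section Aux

variable {n : ℕ}

lemma rowsum_le_normInf (A : Matrix (Fin n) (Fin n) ℝ) (r : Fin n) :
    ∑ j, |A r j| ≤ normInf A := by
  unfold normInf
  exact le_ciSup (Set.Finite.bddAbove (Set.finite_range fun i => ∑ j, |A i j|)) r

lemma normInf_nonneg' [Nonempty (Fin n)] (A : Matrix (Fin n) (Fin n) ℝ) :
    0 ≤ normInf A := by
  obtain ⟨r⟩ := (inferInstance : Nonempty (Fin n))
  exact le_trans (Finset.sum_nonneg fun j _ => abs_nonneg _) (rowsum_le_normInf A r)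

lemma normInf_mul_le [Nonempty (Fin n)] (A B : Matrix (Fin n) (Fin n) ℝ) :
    normInf (A * B) ≤ normInf A * normInf B := by
  apply ciSup_le
  intro r
  calc ∑ c, |(A * B) r c| ≤ ∑ c, ∑ k, |A r k| * |B k c| := by
        apply Finset.sum_le_sum
        intro c _
        rw [Matrix.mul_apply]
        refine le_trans (Finset.abs_sum_le_sum_abs _ _) ?_
        apply Finset.sum_le_sum
        intro k _
        rw [abs_mul]
    _ = ∑ k, |A r k| * ∑ c, |B k c| := by
        rw [Finset.sum_comm]
        simp [Finset.mul_sum]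
    _ ≤ ∑ k, |A r k| * normInf B := by
        apply Finset.sum_le_sum
        intro k _
        exact mul_le_mul_of_nonneg_left (rowsum_le_normInf B k) (abs_nonneg _)
    _ = (∑ k, |A r k|) * normInf B := by rw [Finset.sum_mul]
    _ ≤ normInf A * normInf B :=
        mul_le_mul_of_nonneg_right (rowsum_le_normInf A r) (normInf_nonneg' B)

/-- properties of E we need -/
lemma stoch_props (i : ℕ) (hi : i + 1 < n) (l : ℝ) (hl0 : 0 ≤ l) (hl1 : l < 1)
    (E : Matrix (Fin n) (Fin n) ℝ) (hE : E = Uel n i hi l ∨ E = Lel n i hi l) :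
    (∀ r c, 0 ≤ E r c) ∧ (∀ r, ∑ c, E r c = 1) ∧ IsUnit E.det := by
  have hl1' : 0 ≤ 1 - l := by linarith
  set p : Fin n := ⟨i, Nat.lt_of_succ_lt hi⟩ with hp
  set q : Fin n := ⟨i + 1, hi⟩ with hq
  have hpq : p ≠ q := by
    simp [hp, hq, Fin.ext_iff]
  rcases hE with hE | hE
  · subst hE
    refine ⟨?_, ?_, ?_⟩
    · intro r c
      simp only [Uel, Matrix.of_apply]
      split_ifs <;> simp [hl0, hl1']
    · intro r
      by_cases hr : r = p
      · subst hr
        have : ∀ c : Fin n, Uel n i hi l p c =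
            (if c = p then (1 - l : ℝ) else 0) + (if c = q then l else 0) := by
          intro c
          simp only [Uel, Matrix.of_apply]
          by_cases hc : c = p <;> by_cases hc' : c = q <;>
            simp_all [hpq, eq_comm]
        rw [Finset.sum_congr rfl fun c _ => this c, Finset.sum_add_distrib]
        simp
      · have : ∀ c : Fin n, Uel n i hi l r c = if r = c then (1:ℝ) else 0 := by
          intro c
          simp only [Uel, Matrix.of_apply]
          simp [hr, ← hp, ← hq]
        rw [Finset.sum_congr rfl fun c _ => this c]
        simp
    · have hdet : (Uel n i hi l).det = 1 - l := by
        rw [Matrix.det_of_upperTriangular]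
        · rw [Finset.prod_eq_single p]
          · simp [Uel, ← hp, ← hq, hpq]
          · intro b _ hb
            simp only [Uel, Matrix.of_apply]
            rw [if_neg (by tauto), if_neg (by tauto)]
            simp
          · simp
        · intro a b hab
          simp only [Uel, Matrix.of_apply, id] at hab ⊢
          rw [if_neg, if_neg, if_neg]
          · exact fun h => absurd (h ▸ rfl : a = b) (ne_of_gt hab)
          · rintro ⟨ha, hb⟩
            subst ha; subst hb
            exact absurd hab (by simp [hp, hq, Fin.lt_iff_val_lt_val])
          · rintro ⟨ha, hb⟩
            subst ha; subst hb
            exact lt_irrefl _ hab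
      rw [hdet]
      exact isUnit_iff_ne_zero.mpr (by linarith)
  · subst hE
    refine ⟨?_, ?_, ?_⟩
    · intro r c
      simp only [Lel, Matrix.of_apply]
      split_ifs <;> simp [hl0, hl1']
    · intro r
      by_cases hr : r = q
      · subst hr
        have : ∀ c : Fin n, Lel n i hi l q c =
            (if c = p then (l : ℝ) else 0) + (if c = q then 1 - l else 0) := by
          intro c
          simp only [Lel, Matrix.of_apply]
          by_cases hc : c = p <;> by_cases hc' : c = q <;>
            simp_all [hpq, eq_comm]
        rw [Finset.sum_congr rfl fun c _ => this c, Finset.sum_add_distrib]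
        simp
      · have : ∀ c : Fin n, Lel n i hi l r c = if r = c then (1:ℝ) else 0 := by
          intro c
          simp only [Lel, Matrix.of_apply]
          simp [hr, ← hp, ← hq]
        rw [Finset.sum_congr rfl fun c _ => this c]
        simp
    · have hdet : (Lel n i hi l).det = 1 - l := by
        rw [Matrix.det_of_lowerTriangular]
        · rw [Finset.prod_eq_single q]
          · simp [Lel, hpq.symm, ← hp, ← hq]
          · intro b _ hb
            simp only [Lel, Matrix.of_apply]
            rw [if_neg (by tauto), if_neg (by tauto)]
            simp
          · simp
        · intro a b hab
          simp only [Lel, Matrix.of_apply, OrderDual.toDual_lt_toDual] at hab ⊢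
          rw [if_neg, if_neg, if_neg]
          · exact fun h => absurd (h ▸ rfl : a = b) (ne_of_lt hab)
          · rintro ⟨ha, hb⟩
            subst ha; subst hb
            exact lt_irrefl _ hab
          · rintro ⟨ha, hb⟩
            subst ha; subst hb
            exact absurd hab (by simp [hp, hq, Fin.lt_iff_val_lt_val])
      rw [hdet]
      exact isUnit_iff_ne_zero.mpr (by linarith)

end Aux

theorem stmt6 (n i : ℕ) (hi : i + 1 < n) (l : ℝ) (hl0 : 0 ≤ l) (hl1 : l < 1)
    (M E : Matrix (Fin n) (Fin n) ℝ) (hM : TotPos M) (hMns : IsUnit M.det)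
    (hE : E = Uel n i hi l ∨ E = Lel n i hi l) :
    condInf M ≤ condInf (M * E) := by
  have hn : 0 < n := lt_of_le_of_lt (Nat.zero_le _) hi
  haveI : Nonempty (Fin n) := Fin.pos_iff_nonempty.mp hn
  obtain ⟨hE0, hE1, hEdet⟩ := stoch_props i hi l hl0 hl1 E hE
  -- M has nonnegative entries (1x1 minors)
  have hM0 : ∀ r c, 0 ≤ M r c := by
    intro r c
    have := hM 1 (fun _ => r) (fun _ => c)
      (Subsingleton.strictMono _) (Subsingleton.strictMono _)
    simpa [Matrix.det_fin_one] using this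
  -- row sums of |M*E| equal row sums of |M|
  have hrows : ∀ r, ∑ c, |(M * E) r c| = ∑ c, |M r c| := by
    intro r
    have hME0 : ∀ c, 0 ≤ (M * E) r c := by
      intro c
      rw [Matrix.mul_apply]
      exact Finset.sum_nonneg fun k _ => mul_nonneg (hM0 r k) (hE0 k c)
    calc ∑ c, |(M * E) r c| = ∑ c, (M * E) r c := by
          exact Finset.sum_congr rfl fun c _ => abs_of_nonneg (hME0 c)
      _ = ∑ c, ∑ k, M r k * E k c := by
          exact Finset.sum_congr rfl fun c _ => Matrix.mul_apply
      _ = ∑ k, M r k * ∑ c, E k c := by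
          rw [Finset.sum_comm]; simp [Finset.mul_sum]
      _ = ∑ k, M r k := by simp [hE1]
      _ = ∑ c, |M r c| := by
          exact Finset.sum_congr rfl fun c _ => (abs_of_nonneg (hM0 r c)).symm
  have hnormME : normInf (M * E) = normInf M := by
    unfold normInf
    exact congrArg _ (funext hrows)
  -- normInf E = 1
  have hnormE : normInf E = 1 := by
    unfold normInf
    have : ∀ r : Fin n, ∑ j, |E r j| = 1 := by
      intro r
      rw [← hE1 r]
      exact Finset.sum_congr rfl fun c _ => abs_of_nonneg (hE0 r c)
    rw [funext this]
    exact ciSup_const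
  -- M⁻¹ = E * (M*E)⁻¹
  have hMEdet : IsUnit (M * E).det := by
    rw [Matrix.det_mul]; exact hMns.mul hEdet
  have hMinv : M⁻¹ = E * (M * E)⁻¹ := by
    apply Matrix.inv_eq_right_inv
    rw [← Matrix.mul_assoc, Matrix.mul_nonsing_inv _ hMEdet]
  have hinvle : normInf M⁻¹ ≤ normInf (M * E)⁻¹ := by
    calc normInf M⁻¹ = normInf (E * (M * E)⁻¹) := by rw [hMinv]
      _ ≤ normInf E * normInf (M * E)⁻¹ := normInf_mul_le _ _
      _ = normInf (M * E)⁻¹ := by rw [hnormE, one_mul]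
  unfold condInf
  rw [hnormME]
  exact mul_le_mul_of_nonneg_left hinvle (normInf_nonneg' M)
end

section
/- Let M be a nonsingular totally positive n×n matrix and E = U_i(λ) or L_i(λ) with 0 ≤ λ < 1. Then κ_1(M) ≤ κ_1(E^T M), where κ_1(A) = ‖A‖_1 ‖A^{-1}‖_1. -/
open Matrix BigOperators

lemma totPos_entry {n : ℕ} {M : Matrix (Fin n) (Fin n) ℝ} (hM : TotPos M) (r c : Fin n) :
    0 ≤ M r c := by
  have := hM 1 ![r] ![c] (Subsingleton.strictMono _) (Subsingleton.strictMono _)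
  rw [Matrix.det_fin_one] at this
  simpa using this

lemma inv_sign {m : ℕ} {M : Matrix (Fin (m+1)) (Fin (m+1)) ℝ} (hM : TotPos M)
    (hMns : IsUnit M.det) (r c : Fin (m+1)) :
    0 ≤ (-1 : ℝ) ^ ((r : ℕ) + (c : ℕ)) * M⁻¹ r c := by
  have hdet0 : 0 ≤ M.det := by
    simpa using hM (m+1) id id strictMono_id strictMono_id
  have hminor : 0 ≤ (M.submatrix c.succAbove r.succAbove).det :=
    hM m _ _ (Fin.strictMono_succAbove c) (Fin.strictMono_succAbove r)
  have h1 : ((-1 : ℝ)) ^ ((r:ℕ)+(c:ℕ)) * (-1) ^ ((c:ℕ)+(r:ℕ)) = 1 := by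
    rw [add_comm (c:ℕ), ← pow_add]
    exact Even.neg_one_pow ⟨(r:ℕ)+(c:ℕ), by ring⟩
  rw [Matrix.inv_def]
  rw [Matrix.smul_apply, Matrix.adjugate_fin_succ_eq_det_submatrix]
  have h2 : (-1:ℝ)^((r:ℕ)+(c:ℕ)) * (Ring.inverse M.det • ((-1:ℝ)^((c:ℕ)+(r:ℕ)) *
      (M.submatrix c.succAbove r.succAbove).det)) =
      M.det⁻¹ * (M.submatrix c.succAbove r.succAbove).det := by
    rw [Ring.inverse_eq_inv', smul_eq_mul]
    linear_combination (M.det⁻¹ * (M.submatrix c.succAbove r.succAbove).det) * h1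
  rw [h2]
  exact mul_nonneg (inv_nonneg.mpr hdet0) hminor

lemma absInvEntry {m : ℕ} {M : Matrix (Fin (m+1)) (Fin (m+1)) ℝ} (hM : TotPos M)
    (hMns : IsUnit M.det) (r c : Fin (m+1)) :
    |M⁻¹ r c| = (-1 : ℝ) ^ ((r : ℕ) + (c : ℕ)) * M⁻¹ r c := by
  have h := inv_sign hM hMns r c
  rw [← abs_of_nonneg h, abs_mul, abs_pow, abs_neg, abs_one, one_pow, one_mul]

lemma norm1_eq {n : ℕ} (A : Matrix (Fin n) (Fin n) ℝ) :
    norm1 A = ⨆ c, ∑ r, |A r c| := by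
  simp [norm1, normInf, Matrix.transpose_apply]

lemma norm1_nonneg {m : ℕ} (A : Matrix (Fin (m+1)) (Fin (m+1)) ℝ) : 0 ≤ norm1 A := by
  rw [norm1_eq]
  have hb : BddAbove (Set.range fun c => ∑ r, |A r c|) := (Set.finite_range _).bddAbove
  exact le_trans (Finset.sum_nonneg fun r _ => abs_nonneg _) (le_ciSup hb 0)

lemma norm1_mono {m : ℕ} (X Y : Matrix (Fin (m+1)) (Fin (m+1)) ℝ)
    (h : ∀ c, ∑ r, |X r c| ≤ ∑ r, |Y r c|) : norm1 X ≤ norm1 Y := by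
  rw [norm1_eq, norm1_eq]
  exact ciSup_mono ((Set.finite_range _).bddAbove) h

lemma norm1_stoch {m : ℕ} (M E : Matrix (Fin (m+1)) (Fin (m+1)) ℝ)
    (hMnn : ∀ r c, 0 ≤ M r c) (hEnn : ∀ r c, 0 ≤ E r c) (hErow : ∀ r, ∑ c, E r c = 1) :
    norm1 (Eᵀ * M) = norm1 M := by
  rw [norm1_eq, norm1_eq]
  refine iSup_congr fun c => ?_
  have h1 : ∀ r, |(Eᵀ * M) r c| = ∑ k, E k r * M k c := by
    intro r
    rw [Matrix.mul_apply]
    simp only [Matrix.transpose_apply]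
    rw [abs_of_nonneg (Finset.sum_nonneg fun k _ => mul_nonneg (hEnn k r) (hMnn k c))]
  calc ∑ r, |(Eᵀ * M) r c| = ∑ r, ∑ k, E k r * M k c := Finset.sum_congr rfl fun r _ => h1 r
    _ = ∑ k, ∑ r, E k r * M k c := Finset.sum_comm
    _ = ∑ k, (∑ r, E k r) * M k c := by simp [Finset.sum_mul]
    _ = ∑ k, M k c := by simp [hErow]
    _ = ∑ k, |M k c| := Finset.sum_congr rfl fun k _ => (abs_of_nonneg (hMnn k c)).symm

lemma abs_comb {b x y e : ℝ} (hb : b ≤ 0) (he : e = 1 ∨ e = -1)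
    (hx : |x| = e * x) (hy : |y| = -(e * y)) :
    |x| ≤ |x + b * (y - x)| := by
  have h1 : |x| ≤ (1-b)*|x| + (-b)*|y| := by nlinarith [abs_nonneg x, abs_nonneg y]
  have h2 : (1-b)*|x| + (-b)*|y| = e * (x + b*(y-x)) := by rw [hx, hy]; ring
  calc |x| ≤ (1-b)*|x| + (-b)*|y| := h1
    _ = e * (x + b*(y-x)) := h2
    _ ≤ |x + b*(y-x)| := by
        rcases he with h | h
        · rw [h, one_mul]; exact le_abs_self _
        · rw [h, neg_one_mul]; exact neg_le_abs _

lemma Ssq {n : ℕ} (p q : Fin n) (hpq : q ≠ p) :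
    (single p q (1:ℝ) - single p p 1) *
      (single p q 1 - single p p 1) =
      -(single p q 1 - single p p 1) := by
  rw [sub_mul, mul_sub, mul_sub,
    Matrix.single_mul_single_of_ne (h := hpq),
    Matrix.single_mul_single_of_ne (h := hpq),
    Matrix.single_mul_single_same, Matrix.single_mul_single_same, one_mul]
  abel

lemma inv_formula {n : ℕ} (S : Matrix (Fin n) (Fin n) ℝ) (hS : S * S = -S) {l : ℝ}
    (hl1 : l < 1) : (1 + l • S) * (1 + (l/(l-1)) • S) = 1 := by
  have hne : l - 1 ≠ 0 := by intro h; linarith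
  have expand : (1 + l • S) * (1 + (l/(l-1)) • S)
      = 1 + (l + l/(l-1)) • S + (l/(l-1) * l) • (S * S) := by
    simp only [add_mul, mul_add, one_mul, mul_one, smul_mul_assoc, mul_smul_comm,
      smul_smul, add_smul, smul_add]
    abel
  rw [expand, hS, smul_neg]
  rw [show l/(l-1) * l = l + l/(l-1) by field_simp; ring]
  abel

lemma Uel_rep {n i : ℕ} (hi : i + 1 < n) (l : ℝ) :
    Uel n i hi l = 1 + l • (single (⟨i, Nat.lt_of_succ_lt hi⟩ : Fin n) ⟨i+1, hi⟩ 1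
      - single (⟨i, Nat.lt_of_succ_lt hi⟩ : Fin n) ⟨i, Nat.lt_of_succ_lt hi⟩ 1) := by
  have hne : (⟨i, Nat.lt_of_succ_lt hi⟩ : Fin n) ≠ ⟨i+1, hi⟩ := by
    simp [Fin.ext_iff]
  ext r c
  simp only [Uel, Matrix.of_apply, Matrix.add_apply, Matrix.smul_apply, Matrix.sub_apply,
    Matrix.single, Matrix.one_apply, smul_eq_mul]
  by_cases h1 : r = (⟨i, Nat.lt_of_succ_lt hi⟩ : Fin n) <;>
    by_cases h2 : c = (⟨i, Nat.lt_of_succ_lt hi⟩ : Fin n) <;>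
    by_cases h3 : c = (⟨i+1, hi⟩ : Fin n) <;>
    simp_all [eq_comm] <;> ring

lemma Lel_rep {n i : ℕ} (hi : i + 1 < n) (l : ℝ) :
    Lel n i hi l = 1 + l • (single (⟨i+1, hi⟩ : Fin n) ⟨i, Nat.lt_of_succ_lt hi⟩ 1
      - single (⟨i+1, hi⟩ : Fin n) ⟨i+1, hi⟩ 1) := by
  have hne : (⟨i, Nat.lt_of_succ_lt hi⟩ : Fin n) ≠ ⟨i+1, hi⟩ := by
    simp [Fin.ext_iff]
  ext r c
  simp only [Lel, Matrix.of_apply, Matrix.add_apply, Matrix.smul_apply, Matrix.sub_apply,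
    Matrix.single, Matrix.one_apply, smul_eq_mul]
  by_cases h1 : r = (⟨i+1, hi⟩ : Fin n) <;>
    by_cases h2 : c = (⟨i, Nat.lt_of_succ_lt hi⟩ : Fin n) <;>
    by_cases h3 : c = (⟨i+1, hi⟩ : Fin n) <;>
    simp_all [eq_comm] <;> ring

lemma row_sum_rep {n : ℕ} (p q : Fin n) (hpq : q ≠ p) (l : ℝ) (r : Fin n) :
    ∑ c, ((1 + l • (single p q (1:ℝ) - single p p 1) : Matrix (Fin n) (Fin n) ℝ)) r c = 1 := by
  simp only [Matrix.add_apply, Matrix.one_apply, Matrix.smul_apply, Matrix.sub_apply,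
    Matrix.single, Matrix.of_apply, smul_eq_mul, Finset.sum_add_distrib]
  rw [Finset.sum_ite_eq]
  simp only [Finset.mem_univ, if_true]
  have h : ∑ c, (l * ((if p = r ∧ q = c then (1:ℝ) else 0) - (if p = r ∧ p = c then 1 else 0)))
      = 0 := by
    by_cases hr : p = r
    · simp [hr, mul_sub, Finset.sum_sub_distrib, Finset.sum_ite_eq, mul_ite]
    · simp [hr]
  rw [h, add_zero]

lemma negonepow (k : ℕ) : ((-1:ℝ))^k = 1 ∨ ((-1:ℝ))^k = -1 := by
  rcases Nat.even_or_odd k with h | h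
  · exact Or.inl h.neg_one_pow
  · exact Or.inr h.neg_one_pow

set_option maxHeartbeats 1000000 in
theorem stmt7 (n i : ℕ) (hi : i + 1 < n) (l : ℝ) (hl0 : 0 ≤ l) (hl1 : l < 1)
    (M E : Matrix (Fin n) (Fin n) ℝ) (hM : TotPos M) (hMns : IsUnit M.det)
    (hE : E = Uel n i hi l ∨ E = Lel n i hi l) :
    cond1 M ≤ cond1 (Eᵀ * M) := by
  obtain ⟨m, rfl⟩ : ∃ m, n = m + 1 := ⟨n - 1, by omega⟩
  have hMnn : ∀ r c, 0 ≤ M r c := fun r c => totPos_entry hM r c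
  set b : ℝ := l / (l - 1) with hbdef
  have hb : b ≤ 0 := div_nonpos_of_nonneg_of_nonpos hl0 (by linarith)
  set j0 : Fin (m+1) := ⟨i, Nat.lt_of_succ_lt hi⟩ with hj0
  set j1 : Fin (m+1) := ⟨i+1, hi⟩ with hj1
  have hv0 : (j0 : ℕ) = i := rfl
  have hv1 : (j1 : ℕ) = i + 1 := rfl
  have hne : j0 ≠ j1 := by simp [hj0, hj1, Fin.ext_iff]
  have hEnn : ∀ r c, 0 ≤ E r c := by
    intro r c
    rcases hE with hEc | hEc <;> rw [hEc] <;>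
      [simp only [Uel, Matrix.of_apply]; simp only [Lel, Matrix.of_apply]] <;>
      split_ifs <;> linarith
  -- case split
  rcases hE with hEc | hEc
  · -- Uel case
    set S : Matrix (Fin (m+1)) (Fin (m+1)) ℝ :=
      single j0 j1 1 - single j0 j0 1 with hSdef
    have hErep : E = 1 + l • S := by rw [hEc, Uel_rep]
    have hErow : ∀ r, ∑ c, E r c = 1 := by
      intro r; rw [hErep]; exact row_sum_rep j0 j1 hne.symm l r
    have hSsq : S * S = -S := Ssq j0 j1 hne.symm
    have hEinv : E⁻¹ = 1 + b • S :=
      Matrix.inv_eq_right_inv (by rw [hErep]; exact inv_formula S hSsq hl1)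
    have hY : ∀ r c, (Eᵀ * M)⁻¹ r c
        = M⁻¹ r c + (if c = j0 then b * (M⁻¹ r j1 - M⁻¹ r j0) else 0) := by
      intro r c
      rw [Matrix.mul_inv_rev, ← Matrix.transpose_nonsing_inv, hEinv, Matrix.mul_apply]
      have hexp : ∀ k : Fin (m+1), M⁻¹ r k * (1 + b • S)ᵀ k c =
          (if c = j0 then ((if k = j0 then (1-b) * M⁻¹ r j0 else 0)
            + (if k = j1 then b * M⁻¹ r j1 else 0))
          else (if k = c then M⁻¹ r c else 0)) := by
        intro k
        simp only [Matrix.transpose_apply, Matrix.add_apply, Matrix.smul_apply,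
          Matrix.sub_apply, Matrix.one_apply, hSdef, Matrix.single,
          Matrix.of_apply, smul_eq_mul]
        by_cases h0 : c = j0 <;> by_cases h1 : k = j0 <;> by_cases h2 : k = j1 <;>
          simp_all [eq_comm] <;> ring
      rw [Finset.sum_congr rfl fun k _ => hexp k]
      by_cases h0 : c = j0
      · simp only [h0, if_pos rfl, Finset.sum_add_distrib, Finset.sum_ite_eq',
          Finset.mem_univ, if_true]
        ring
      · simp [h0, Finset.sum_ite_eq']
    have hcol : ∀ c, ∑ r, |M⁻¹ r c| ≤ ∑ r, |(Eᵀ * M)⁻¹ r c| := by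
      intro c
      apply Finset.sum_le_sum
      intro r _
      rw [hY r c]
      by_cases h0 : c = j0
      · subst h0
        rw [if_pos rfl]
        have hx : |M⁻¹ r j0| = (-1:ℝ)^((r:ℕ)+(j0:ℕ)) * M⁻¹ r j0 := absInvEntry hM hMns r j0
        have hy : |M⁻¹ r j1| = -((-1:ℝ)^((r:ℕ)+(j0:ℕ)) * M⁻¹ r j1) := by
          rw [absInvEntry hM hMns r j1,
            show (r:ℕ) + (j1:ℕ) = ((r:ℕ) + (j0:ℕ)) + 1 by rw [hv0, hv1]; omega, pow_succ]
          ring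
        exact abs_comb hb (negonepow _) hx hy
      · rw [if_neg h0, add_zero]
    have hnorm := norm1_stoch M E hMnn hEnn hErow
    have hinv := norm1_mono _ _ hcol
    calc cond1 M = norm1 M * norm1 M⁻¹ := rfl
      _ ≤ norm1 M * norm1 ((Eᵀ * M)⁻¹) := mul_le_mul_of_nonneg_left hinv (norm1_nonneg M)
      _ = cond1 (Eᵀ * M) := by rw [cond1, hnorm]
  · -- Lel case
    set S : Matrix (Fin (m+1)) (Fin (m+1)) ℝ :=
      single j1 j0 1 - single j1 j1 1 with hSdef
    have hErep : E = 1 + l • S := by rw [hEc, Lel_rep]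
    have hErow : ∀ r, ∑ c, E r c = 1 := by
      intro r; rw [hErep]; exact row_sum_rep j1 j0 hne l r
    have hSsq : S * S = -S := Ssq j1 j0 hne
    have hEinv : E⁻¹ = 1 + b • S :=
      Matrix.inv_eq_right_inv (by rw [hErep]; exact inv_formula S hSsq hl1)
    have hY : ∀ r c, (Eᵀ * M)⁻¹ r c
        = M⁻¹ r c + (if c = j1 then b * (M⁻¹ r j0 - M⁻¹ r j1) else 0) := by
      intro r c
      rw [Matrix.mul_inv_rev, ← Matrix.transpose_nonsing_inv, hEinv, Matrix.mul_apply]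
      have hexp : ∀ k : Fin (m+1), M⁻¹ r k * (1 + b • S)ᵀ k c =
          (if c = j1 then ((if k = j1 then (1-b) * M⁻¹ r j1 else 0)
            + (if k = j0 then b * M⁻¹ r j0 else 0))
          else (if k = c then M⁻¹ r c else 0)) := by
        intro k
        simp only [Matrix.transpose_apply, Matrix.add_apply, Matrix.smul_apply,
          Matrix.sub_apply, Matrix.one_apply, hSdef, Matrix.single,
          Matrix.of_apply, smul_eq_mul]
        by_cases h0 : c = j1 <;> by_cases h1 : k = j1 <;> by_cases h2 : k = j0 <;>
          simp_all [eq_comm] <;> ring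
      rw [Finset.sum_congr rfl fun k _ => hexp k]
      by_cases h0 : c = j1
      · simp only [h0, if_pos rfl, Finset.sum_add_distrib, Finset.sum_ite_eq',
          Finset.mem_univ, if_true]
        ring
      · simp [h0, Finset.sum_ite_eq']
    have hcol : ∀ c, ∑ r, |M⁻¹ r c| ≤ ∑ r, |(Eᵀ * M)⁻¹ r c| := by
      intro c
      apply Finset.sum_le_sum
      intro r _
      rw [hY r c]
      by_cases h0 : c = j1
      · subst h0
        rw [if_pos rfl]
        have hx : |M⁻¹ r j1| = (-1:ℝ)^((r:ℕ)+(j1:ℕ)) * M⁻¹ r j1 := absInvEntry hM hMns r j1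
        have hy : |M⁻¹ r j0| = -((-1:ℝ)^((r:ℕ)+(j1:ℕ)) * M⁻¹ r j0) := by
          have e1 : (r:ℕ) + (j1:ℕ) = ((r:ℕ) + (j0:ℕ)) + 1 := by rw [hv0, hv1]; omega
          rw [absInvEntry hM hMns r j0, e1, pow_succ]
          ring
        exact abs_comb hb (negonepow _) hx hy
      · rw [if_neg h0, add_zero]
    have hnorm := norm1_stoch M E hMnn hEnn hErow
    have hinv := norm1_mono _ _ hcol
    calc cond1 M = norm1 M * norm1 M⁻¹ := rfl
      _ ≤ norm1 M * norm1 ((Eᵀ * M)⁻¹) := mul_le_mul_of_nonneg_left hinv (norm1_nonneg M)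
      _ = cond1 (Eᵀ * M) := by rw [cond1, hnorm]
end

section
/- Let M be a nonsingular totally positive n×n matrix and K a nonsingular row-stochastic totally positive n×n matrix. Then |(MK)^{-1}| dominates M^{-1} entrywise. -/
open Matrix BigOperators

section TPaux

variable {N : ℕ}

private lemma strictMono_fin1 (a : Fin N) : StrictMono (![a] : Fin 1 → Fin N) := by
  intro i j h
  rw [Fin.lt_def] at h
  omega

private lemma strictMono_pair {a b : Fin N} (h : a < b) :
    StrictMono (![a, b] : Fin 2 → Fin N) := by
  intro i j hij
  fin_cases i <;> fin_cases j
  · exact absurd hij (lt_irrefl _)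
  · simpa using h
  · exact absurd hij (by decide)
  · exact absurd hij (lt_irrefl _)

private lemma TotPos.entry_nonneg {A : Matrix (Fin N) (Fin N) ℝ} (hA : TotPos A)
    (i j : Fin N) : 0 ≤ A i j := by
  have := hA 1 ![i] ![j] (strictMono_fin1 i) (strictMono_fin1 j)
  rw [Matrix.det_fin_one] at this
  simpa using this

private lemma TotPos.det_nonneg {A : Matrix (Fin N) (Fin N) ℝ} (hA : TotPos A) :
    0 ≤ A.det := by
  have := hA N id id strictMono_id strictMono_id
  simpa using this

private lemma TotPos.minor2 {A : Matrix (Fin N) (Fin N) ℝ} (hA : TotPos A)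
    {a b c d : Fin N} (hab : a < b) (hcd : c < d) :
    0 ≤ A a c * A b d - A a d * A b c := by
  have := hA 2 ![a, b] ![c, d] (strictMono_pair hab) (strictMono_pair hcd)
  rw [Matrix.det_fin_two] at this
  simpa using this

end TPaux

section Schur

/-- Schur complement with respect to the (0,0) entry. -/
noncomputable def schurC {m : ℕ} (K : Matrix (Fin (m + 1)) (Fin (m + 1)) ℝ) :
    Matrix (Fin m) (Fin m) ℝ :=
  Matrix.of fun i c => K i.succ c.succ - K i.succ 0 * K 0 c.succ / K 0 0

lemma schurC_apply {m : ℕ} (K : Matrix (Fin (m + 1)) (Fin (m + 1)) ℝ) (i c : Fin m) :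
    schurC K i c = K i.succ c.succ - K i.succ 0 * K 0 c.succ / K 0 0 := rfl

lemma det_eq_schurC {m : ℕ} (K : Matrix (Fin (m + 1)) (Fin (m + 1)) ℝ)
    (h : K 0 0 ≠ 0) : K.det = K 0 0 * (schurC K).det := by
  classical
  set L : Matrix (Fin (m + 1)) (Fin (m + 1)) ℝ :=
    Matrix.of fun i j => if i = j then 1 else if j = 0 then K i 0 / K 0 0 else 0 with hL
  set U : Matrix (Fin (m + 1)) (Fin (m + 1)) ℝ :=
    Matrix.of fun i j => if i = 0 then K 0 j else K i j - K i 0 * K 0 j / K 0 0 with hU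
  have hKLU : K = L * U := by
    funext i j
    rw [Matrix.mul_apply, Fin.sum_univ_succ]
    rcases Fin.eq_zero_or_eq_succ i with rfl | ⟨i', rfl⟩
    · have h1 : ∀ l' : Fin m, L 0 l'.succ * U l'.succ j = 0 := by
        intro l'
        have : L 0 l'.succ = 0 := by
          simp [hL, (Fin.succ_ne_zero l').symm, Fin.succ_ne_zero l']
        rw [this, zero_mul]
      rw [Finset.sum_congr rfl fun l' _ => h1 l', Finset.sum_const, smul_zero, add_zero]
      simp [hL, hU]
    · have h2 : ∀ l' : Fin m, L i'.succ l'.succ * U l'.succ j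
          = (if i' = l' then (1 : ℝ) else 0) * U l'.succ j := by
        intro l'
        congr 1
        simp [hL, Fin.succ_inj, Fin.succ_ne_zero]
      rw [Finset.sum_congr rfl fun l' _ => h2 l']
      simp only [ite_mul, one_mul, zero_mul, Finset.sum_ite_eq, Finset.mem_univ, if_pos]
      have hL0 : L i'.succ 0 = K i'.succ 0 / K 0 0 := by
        simp [hL, Fin.succ_ne_zero]
      have hU0 : U 0 j = K 0 j := by simp [hU]
      have hUs : U i'.succ j = K i'.succ j - K i'.succ 0 * K 0 j / K 0 0 := by
        simp [hU, Fin.succ_ne_zero]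
      rw [hL0, hU0, hUs]
      field_simp
      ring
  have hdetL : L.det = 1 := by
    have htri : L.BlockTriangular OrderDual.toDual := by
      intro i j hij
      have hij' : i < j := hij
      have h1 : i ≠ j := ne_of_lt hij'
      have h2 : j ≠ 0 := by
        intro e
        exact absurd (e ▸ hij') (Fin.not_lt_zero i)
      simp [hL, h1, h2]
    rw [Matrix.det_of_lowerTriangular L htri]
    have : ∀ i, L i i = 1 := fun i => by simp [hL]
    simp [this]
  have hdetU : U.det = K 0 0 * (schurC K).det := by
    rw [Matrix.det_succ_column_zero]
    rw [Fin.sum_univ_succ]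
    have hz : ∀ i : Fin m,
        (-1 : ℝ) ^ ((i.succ : Fin (m+1)) : ℕ) * U i.succ 0 *
          (U.submatrix i.succ.succAbove Fin.succ).det = 0 := by
      intro i
      have : U i.succ 0 = 0 := by
        have : K i.succ 0 - K i.succ 0 * K 0 0 / K 0 0 = 0 := by
          rw [mul_div_assoc, div_self h, mul_one, sub_self]
        simpa [hU, Fin.succ_ne_zero] using this
      rw [this, mul_zero, zero_mul]
    rw [Finset.sum_congr rfl fun i _ => hz i, Finset.sum_const, smul_zero, add_zero]
    have hsub : U.submatrix (Fin.succAbove 0) Fin.succ = schurC K := by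
      funext i c
      simp [hU, Fin.succ_ne_zero, schurC_apply]
    have hU00 : U 0 0 = K 0 0 := by simp [hU]
    rw [hsub, hU00]
    simp
  conv_lhs => rw [hKLU]
  rw [Matrix.det_mul, hdetL, one_mul, hdetU]

private lemma strictMono_cons {p m : ℕ} {r : Fin p → Fin m} (hr : StrictMono r) :
    StrictMono (Fin.cons 0 (Fin.succ ∘ r) : Fin (p + 1) → Fin (m + 1)) := by
  intro i j hij
  induction i using Fin.cases with
  | zero =>
    induction j using Fin.cases with
    | zero => exact absurd hij (lt_irrefl _)
    | succ j' => simpa using Fin.succ_pos (r j')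
  | succ i' =>
    induction j using Fin.cases with
    | zero => exact absurd hij (Fin.not_lt_zero _)
    | succ j' =>
      simp only [Fin.cons_succ, Function.comp]
      exact Fin.succ_lt_succ_iff.mpr (hr (Fin.succ_lt_succ_iff.mp hij))

lemma schurC_submatrix {m p : ℕ} (K : Matrix (Fin (m + 1)) (Fin (m + 1)) ℝ)
    (r c : Fin p → Fin m) :
    (schurC K).submatrix r c =
      schurC (K.submatrix (Fin.cons 0 (Fin.succ ∘ r)) (Fin.cons 0 (Fin.succ ∘ c))) := by
  funext i j
  simp [schurC_apply, Matrix.submatrix_apply, Fin.cons_succ, Fin.cons_zero]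

lemma totPos_schurC {m : ℕ} {K : Matrix (Fin (m + 1)) (Fin (m + 1)) ℝ}
    (hK : TotPos K) (h : 0 < K 0 0) : TotPos (schurC K) := by
  intro p r c hr hc
  rw [schurC_submatrix]
  set F := K.submatrix (Fin.cons 0 (Fin.succ ∘ r)) (Fin.cons 0 (Fin.succ ∘ c)) with hF
  have hF00 : F 0 0 = K 0 0 := by simp [hF]
  have hdet : F.det = F 0 0 * (schurC F).det :=
    det_eq_schurC F (by rw [hF00]; exact ne_of_gt h)
  have hFdet : 0 ≤ F.det := hK (p + 1) _ _ (strictMono_cons hr) (strictMono_cons hc)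
  rw [hdet, hF00] at hFdet
  nlinarith [hFdet, h]

lemma schurC_delete {m : ℕ} (K : Matrix (Fin (m + 2)) (Fin (m + 2)) ℝ) (j : Fin (m + 1)) :
    schurC (K.submatrix j.succ.succAbove j.succ.succAbove)
      = (schurC K).submatrix j.succAbove j.succAbove := by
  funext i c
  simp [schurC_apply, Matrix.submatrix_apply, Fin.succ_succAbove_succ, Fin.succ_succAbove_zero]

end Schur


section FlipMain

lemma det_flip {N : ℕ} (A : Matrix (Fin N) (Fin N) ℝ) :
    (A.submatrix Fin.rev Fin.rev).det = A.det := by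
  exact Matrix.det_submatrix_equiv_self (Fin.revPerm : Fin N ≃ Fin N) A

lemma totPos_flip {N : ℕ} {A : Matrix (Fin N) (Fin N) ℝ} (hA : TotPos A) :
    TotPos (A.submatrix Fin.rev Fin.rev) := by
  intro k r c hr hc
  have e : (A.submatrix Fin.rev Fin.rev).submatrix r c
      = (A.submatrix (Fin.rev ∘ r ∘ Fin.rev) (Fin.rev ∘ c ∘ Fin.rev)).submatrix
          Fin.rev Fin.rev := by
    funext i j
    simp [Matrix.submatrix_apply, Fin.rev_rev]
  rw [e, det_flip]
  apply hA
  · intro a b hab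
    simp only [Function.comp]
    exact Fin.rev_lt_rev.mpr (hr (Fin.rev_lt_rev.mpr hab))
  · intro a b hab
    simp only [Function.comp]
    exact Fin.rev_lt_rev.mpr (hc (Fin.rev_lt_rev.mpr hab))

lemma corner_zero_det {m : ℕ} {K : Matrix (Fin (m + 1)) (Fin (m + 1)) ℝ}
    (hK : TotPos K) (h : K 0 0 = 0) : K.det = 0 := by
  by_cases hcol : ∀ i, K i 0 = 0
  · exact Matrix.det_eq_zero_of_column_eq_zero 0 hcol
  · push_neg at hcol
    obtain ⟨i, hi⟩ := hcol
    have hi0 : i ≠ 0 := fun e => hi (e ▸ h)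
    have hipos : 0 < K i 0 := lt_of_le_of_ne (hK.entry_nonneg i 0) (Ne.symm hi)
    apply Matrix.det_eq_zero_of_row_eq_zero 0
    intro c
    rcases eq_or_ne c 0 with rfl | hc
    · exact h
    · have h2 := hK.minor2 (Fin.pos_of_ne_zero hi0) (Fin.pos_of_ne_zero hc)
      have hc0 : 0 ≤ K 0 c := hK.entry_nonneg 0 c
      rw [h, zero_mul, zero_sub] at h2
      have hle : K 0 c ≤ 0 := by nlinarith [h2, hipos]
      linarith

lemma schurC_rowsum {m : ℕ} {K : Matrix (Fin (m + 1)) (Fin (m + 1)) ℝ}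
    (hK : TotPos K) (h : 0 < K 0 0) (hrow : ∀ i, ∑ c, K i c ≤ 1) (i : Fin m) :
    ∑ c, schurC K i c ≤ 1 := by
  have h1 : ∑ c : Fin m, schurC K i c ≤ ∑ c : Fin m, K i.succ c.succ := by
    apply Finset.sum_le_sum
    intro c _
    have hnn : 0 ≤ K i.succ 0 * K 0 c.succ / K 0 0 :=
      div_nonneg (mul_nonneg (hK.entry_nonneg _ _) (hK.entry_nonneg _ _)) h.le
    rw [schurC_apply]
    linarith
  have h2 : ∑ c : Fin m, K i.succ c.succ ≤ 1 := by
    have hr := hrow i.succ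
    rw [Fin.sum_univ_succ] at hr
    have := hK.entry_nonneg i.succ 0
    linarith
  linarith

lemma main_det : ∀ (m : ℕ) (K : Matrix (Fin (m + 1)) (Fin (m + 1)) ℝ), TotPos K →
    (∀ i, ∑ c, K i c ≤ 1) → ∀ j : Fin (m + 1),
    K.det ≤ (K.submatrix j.succAbove j.succAbove).det := by
  intro m
  induction m with
  | zero =>
    intro K hK hrow j
    have hj : j = 0 := Fin.ext (by have := j.isLt; omega)
    subst hj
    rw [Matrix.det_fin_one]
    have he : (K.submatrix (0 : Fin 1).succAbove (0 : Fin 1).succAbove).det = 1 :=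
      Matrix.det_fin_zero
    rw [he]
    calc K 0 0 ≤ ∑ c, K 0 c :=
          Finset.single_le_sum (fun c _ => hK.entry_nonneg 0 c) (Finset.mem_univ 0)
      _ ≤ 1 := hrow 0
  | succ m ih =>
    have key : ∀ K : Matrix (Fin (m + 2)) (Fin (m + 2)) ℝ, TotPos K →
        (∀ i, ∑ c, K i c ≤ 1) → ∀ j' : Fin (m + 1),
        K.det ≤ (K.submatrix j'.succ.succAbove j'.succ.succAbove).det := by
      intro K hK hrow j'
      by_cases h0 : K 0 0 = 0
      · rw [corner_zero_det hK h0]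
        exact hK (m + 1) _ _ (Fin.strictMono_succAbove _) (Fin.strictMono_succAbove _)
      · have hpos : 0 < K 0 0 := lt_of_le_of_ne (hK.entry_nonneg 0 0) (Ne.symm h0)
        have e1 : K.det = K 0 0 * (schurC K).det := det_eq_schurC K h0
        have h00 : (K.submatrix j'.succ.succAbove j'.succ.succAbove) 0 0 = K 0 0 := by
          simp [Matrix.submatrix_apply, Fin.succ_succAbove_zero]
        have e2 : (K.submatrix j'.succ.succAbove j'.succ.succAbove).det
            = K 0 0 * ((schurC K).submatrix j'.succAbove j'.succAbove).det := by
          rw [det_eq_schurC _ (by rw [h00]; exact h0), h00, schurC_delete]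
        have hIH := ih (schurC K) (totPos_schurC hK hpos)
          (fun i => schurC_rowsum hK hpos hrow i) j'
        rw [e1, e2]
        exact mul_le_mul_of_nonneg_left hIH hpos.le
    intro K hK hrow j
    induction j using Fin.cases with
    | succ j' => exact key K hK hrow j'
    | zero =>
      set Kf : Matrix (Fin (m + 2)) (Fin (m + 2)) ℝ := K.submatrix Fin.rev Fin.rev with hKfdef
      have hKf : TotPos Kf := totPos_flip hK
      have hrowf : ∀ i, ∑ c, Kf i c ≤ 1 := by
        intro i
        have he : ∑ c, Kf i c = ∑ c, K i.rev c :=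
          Fintype.sum_equiv (Fin.revPerm) _ _ (fun c => rfl)
        rw [he]
        exact hrow _
      have hkey := key Kf hKf hrowf (Fin.last m)
      have eL : Kf.det = K.det := det_flip K
      have eR : (Kf.submatrix (Fin.last m).succ.succAbove (Fin.last m).succ.succAbove).det
          = (K.submatrix (0 : Fin (m + 2)).succAbove (0 : Fin (m + 2)).succAbove).det := by
        rw [Fin.succ_last, Fin.succAbove_last, Fin.succAbove_zero]
        have he : Kf.submatrix Fin.castSucc Fin.castSucc
            = (K.submatrix Fin.succ Fin.succ).submatrix Fin.rev Fin.rev := by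
          funext i c
          simp [hKfdef, Matrix.submatrix_apply, Fin.rev_castSucc]
        rw [he, det_flip]
      rw [← eL, ← eR]
      exact hkey

end FlipMain

section InvEntry

lemma inv_apply_minor {m : ℕ} (A : Matrix (Fin (m + 1)) (Fin (m + 1)) ℝ) (j k : Fin (m + 1)) :
    A⁻¹ j k = (A.det)⁻¹ *
      ((-1 : ℝ) ^ ((j : ℕ) + (k : ℕ)) * (A.submatrix k.succAbove j.succAbove).det) := by
  rw [Matrix.inv_def, Matrix.smul_apply, smul_eq_mul, Ring.inverse_eq_inv]
  congr 1
  have upd : ∀ c, (A.updateRow k (Pi.single j 1)) k c = if c = j then 1 else 0 := by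
    intro c
    rw [Matrix.updateRow_self]
    exact Pi.single_apply j 1 c
  have sub : (A.updateRow k (Pi.single j 1)).submatrix k.succAbove j.succAbove
      = A.submatrix k.succAbove j.succAbove := by
    funext a b
    simp [Matrix.submatrix_apply, Matrix.updateRow_ne (Fin.succAbove_ne k a)]
  rw [Matrix.adjugate_apply, Matrix.det_succ_row _ k]
  rw [Finset.sum_eq_single j]
  · rw [upd j, if_pos rfl, sub, mul_one]
    congr 2
    omega
  · intro b _ hbj
    rw [upd b, if_neg hbj, mul_zero, zero_mul]
  · intro hj
    exact absurd (Finset.mem_univ j) hj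

end InvEntry

theorem stmt9 (n : ℕ) (M K : Matrix (Fin n) (Fin n) ℝ)
    (hM : TotPos M) (hMns : IsUnit M.det)
    (hK : TotPos K) (hKs : RowStoch K) (hKns : IsUnit K.det) :
    ∀ j k, |(M⁻¹) j k| ≤ |((M * K)⁻¹) j k| := by
  obtain ⟨hKnn, hKsum⟩ := hKs
  cases n with
  | zero => intro j k; exact j.elim0
  | succ m =>
    intro j k
    have hMd : 0 < M.det := lt_of_le_of_ne hM.det_nonneg (Ne.symm hMns.ne_zero)
    have hKd : 0 < K.det := lt_of_le_of_ne hK.det_nonneg (Ne.symm hKns.ne_zero)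
    set b : Fin (m + 1) → ℝ :=
      fun l => (M.det)⁻¹ * (M.submatrix k.succAbove l.succAbove).det with hb
    set cc : Fin (m + 1) → ℝ :=
      fun l => (K.det)⁻¹ * (K.submatrix l.succAbove j.succAbove).det with hc
    have hbnn : ∀ l, 0 ≤ b l := fun l =>
      mul_nonneg (inv_nonneg.mpr hMd.le)
        (hM m _ _ (Fin.strictMono_succAbove _) (Fin.strictMono_succAbove _))
    have hcnn : ∀ l, 0 ≤ cc l := fun l =>
      mul_nonneg (inv_nonneg.mpr hKd.le)
        (hK m _ _ (Fin.strictMono_succAbove _) (Fin.strictMono_succAbove _))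
    have hMinv : ∀ l, M⁻¹ l k = (-1 : ℝ) ^ ((l : ℕ) + (k : ℕ)) * b l := by
      intro l
      rw [inv_apply_minor, hb]
      ring
    have hKinv : ∀ l, K⁻¹ j l = (-1 : ℝ) ^ ((j : ℕ) + (l : ℕ)) * cc l := by
      intro l
      rw [inv_apply_minor, hc]
      ring
    have hcj : 1 ≤ cc j := by
      have hmain := main_det m K hK (fun i => le_of_eq (hKsum i)) j
      calc (1 : ℝ) = (K.det)⁻¹ * K.det := (inv_mul_cancel₀ hKd.ne').symm
        _ ≤ cc j := mul_le_mul_of_nonneg_left hmain (inv_nonneg.mpr hKd.le)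
    have eM : |M⁻¹ j k| = b j := by
      rw [hMinv j, abs_mul, abs_pow, abs_neg, abs_one, one_pow, one_mul,
        abs_of_nonneg (hbnn j)]
    have eMK : (M * K)⁻¹ j k = (-1 : ℝ) ^ ((j : ℕ) + (k : ℕ)) * ∑ l, cc l * b l := by
      rw [Matrix.mul_inv_rev, Matrix.mul_apply, Finset.mul_sum]
      apply Finset.sum_congr rfl
      intro l _
      rw [hKinv l, hMinv l]
      have hsgn : (-1 : ℝ) ^ ((j : ℕ) + (l : ℕ)) * (-1 : ℝ) ^ ((l : ℕ) + (k : ℕ))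
          = (-1 : ℝ) ^ ((j : ℕ) + (k : ℕ)) := by
        rw [← pow_add]
        have e2 : (j : ℕ) + (l : ℕ) + ((l : ℕ) + (k : ℕ)) = (j : ℕ) + (k : ℕ) + 2 * l := by
          ring
        rw [e2, pow_add, pow_mul, neg_one_sq, one_pow, mul_one]
      calc (-1 : ℝ) ^ ((j : ℕ) + (l : ℕ)) * cc l * ((-1 : ℝ) ^ ((l : ℕ) + (k : ℕ)) * b l)
          = ((-1 : ℝ) ^ ((j : ℕ) + (l : ℕ)) * (-1 : ℝ) ^ ((l : ℕ) + (k : ℕ))) *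
            (cc l * b l) := by ring
        _ = (-1 : ℝ) ^ ((j : ℕ) + (k : ℕ)) * (cc l * b l) := by rw [hsgn]
    have hsum_nn : 0 ≤ ∑ l, cc l * b l :=
      Finset.sum_nonneg fun l _ => mul_nonneg (hcnn l) (hbnn l)
    have eMKabs : |(M * K)⁻¹ j k| = ∑ l, cc l * b l := by
      rw [eMK, abs_mul, abs_pow, abs_neg, abs_one, one_pow, one_mul,
        abs_of_nonneg hsum_nn]
    rw [eM, eMKabs]
    calc b j = 1 * b j := (one_mul _).symm
      _ ≤ cc j * b j := mul_le_mul_of_nonneg_right hcj (hbnn j)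
      _ ≤ ∑ l, cc l * b l :=
        Finset.single_le_sum (fun l _ => mul_nonneg (hcnn l) (hbnn l)) (Finset.mem_univ j)
end
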